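/- arXiv:1510.00326 — 3 statements merged into one kernel-verified Lean document; each statement's English description precedes it below -/
import Mathlib

section
/- Let X and Y be flow equivalent shift spaces. Then h(X) = 0 if and only if h(Y) = 0. -/
open Filter

namespace SymbDyn

/-- A point of a (full) shift: a bi-infinite sequence of symbols, where symbols
are drawn from the universal symbol set `ℕ`. -/
abbrev Point : Type := ℤ → ℕ

/-- The shift map `σ`, with `σ(x) i = x (i + 1)`. -/
def shift (x : Point) : Point := fun i => x (i + 1)

/-- The word `w` occurs in `x` starting at position `i`. -/
def MatchesAt (w : List ℕ) (x : Point) (i : ℤ) : Prop :=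
  ∀ j : Fin w.length, x (i + ((j : ℕ) : ℤ)) = w.get j

/-- The word `w` occurs (as a factor) somewhere in the point `x`. -/
def occursIn (w : List ℕ) (x : Point) : Prop := ∃ i : ℤ, MatchesAt w x i

/-- All points over the alphabet `A` in which no word of `F` occurs. -/
def XF (A : Set ℕ) (F : Set (List ℕ)) : Set Point :=
  { x | (∀ i, x i ∈ A) ∧ ∀ w ∈ F, ¬ occursIn w x }

/-- A shift space: a set of the form `X_F` over some finite alphabet. -/
def IsShiftSpace (X : Set Point) : Prop :=
  ∃ A : Set ℕ, A.Finite ∧ ∃ F : Set (List ℕ), X = XF A F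

/-- A shift of finite type: `X_F` for a finite set `F` of forbidden words. -/
def IsSFT (X : Set Point) : Prop :=
  ∃ A : Set ℕ, A.Finite ∧ ∃ F : Set (List ℕ), F.Finite ∧ X = XF A F

/-- The language `B(X)` of a shift space `X`. -/
def language (X : Set Point) : Set (List ℕ) := { w | ∃ x ∈ X, occursIn w x }

/-- The words of length `n` in the language of `X`, i.e. `B_n(X)`. -/
def Bn (X : Set Point) (n : ℕ) : Set (List ℕ) := { w ∈ language X | w.length = n }

/-- The set of symbols actually occurring in points of `X`. -/
def alphabet (X : Set Point) : Set ℕ := { a | ∃ x ∈ X, ∃ i : ℤ, x i = a }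

/-- `φ` is a sliding block code from `X` to `Y`: it maps `X` into `Y` and there are
`m, n` and a block map `Φ` with `φ(x) i = Φ (x (i - m) … x (i + n))` on `X`. -/
def IsSlidingBlockCode (X Y : Set Point) (φ : Point → Point) : Prop :=
  Set.MapsTo φ X Y ∧
    ∃ (m n : ℕ) (Φ : List ℕ → ℕ), ∀ x ∈ X, ∀ i : ℤ,
      φ x i = Φ (List.ofFn fun j : Fin (m + n + 1) => x (i - (m : ℤ) + ((j : ℕ) : ℤ)))

/-- `X` and `Y` are conjugate: there is a bijective sliding block code from `X` onto `Y`. -/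
def Conjugate (X Y : Set Point) : Prop :=
  ∃ φ : Point → Point, IsSlidingBlockCode X Y φ ∧ Set.BijOn φ X Y

/-- A sofic shift: the image of a shift of finite type under a surjective sliding
block code. -/
def IsSofic (X : Set Point) : Prop :=
  ∃ Z : Set Point, IsSFT Z ∧ ∃ φ : Point → Point,
    IsSlidingBlockCode Z X φ ∧ Set.SurjOn φ Z X

/-- `y` is obtained from `x` by replacing every occurrence of the word `u` by the
word `v` (up to an overall shift).  Here `s k` enumerates, in order, the starting
positions of the blocks of `x` (each block being either an occurrence of `u`, all
occurrences of `u` being blocks, or a single letter), and `t k` is the starting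
position in `y` of the block corresponding to block `k` of `x`. -/
def ReplacedBy (u v : List ℕ) (x y : Point) : Prop :=
  u ≠ [] ∧
    ∃ s t : ℤ → ℤ,
      (∀ i : ℤ, MatchesAt u x i → ∃ k, s k = i) ∧
      (∀ m : ℤ, ∃ k, t k ≤ m ∧ m < t (k + 1)) ∧
      ∀ k : ℤ,
        (MatchesAt u x (s k) →
          s (k + 1) = s k + (u.length : ℤ) ∧ t (k + 1) = t k + (v.length : ℤ) ∧
            ∀ j : Fin v.length, y (t k + ((j : ℕ) : ℤ)) = v.get j) ∧
        (¬ MatchesAt u x (s k) →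
          s (k + 1) = s k + 1 ∧ t (k + 1) = t k + 1 ∧ y (t k) = x (s k))

/-- `X^{u ↦ v}`: the set obtained from `X` by replacing every occurrence of the
word `u` by the word `v` in every point, closed under the shift map. -/
def ReplaceWord (u v : List ℕ) (X : Set Point) : Set Point :=
  { y | ∃ x ∈ X, ReplacedBy u v x y }

/-- `Y` is a symbol expansion `X^{a ↦ a◊}` of `X`, for a letter `a` of `X` and a
symbol `◊` not in the alphabet of `X`. -/
def IsSymbolExpansionOf (Y X : Set Point) : Prop :=
  ∃ a dia : ℕ, a ∈ alphabet X ∧ dia ∉ alphabet X ∧ Y = ReplaceWord [a] [a, dia] X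

/-- One step of the Parry–Sullivan chain: both sets are shift spaces, and they are
conjugate or one is a symbol expansion of the other. -/
def FEStep (X Y : Set Point) : Prop :=
  IsShiftSpace X ∧ IsShiftSpace Y ∧
    (Conjugate X Y ∨ Conjugate Y X ∨ IsSymbolExpansionOf Y X ∨ IsSymbolExpansionOf X Y)

/-- Flow equivalence (Parry–Sullivan): a finite chain of conjugacies and symbol
expansions/contractions. -/
def FlowEquiv (X Y : Set Point) : Prop := Relation.ReflTransGen FEStep X Y

/-- The entropy `h(X) = lim_{n→∞} (1/n) log₂ |B_n(X)|` of a shift space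
(stated via `limsup`; for shift spaces the limit exists). -/
noncomputable def entropy (X : Set Point) : ℝ :=
  Filter.limsup (fun n : ℕ => Real.logb 2 ((Bn X n).ncard : ℝ) / (n : ℝ)) Filter.atTop

/-- `h([X])`: the set of entropies of shift spaces flow equivalent to `X`. -/
def entropySet (X : Set Point) : Set ℝ :=
  { r | ∃ Y : Set Point, IsShiftSpace Y ∧ FlowEquiv Y X ∧ entropy Y = r }

/-- A set of reals is dense in `ℝ⁺`. -/
def DenseInPos (s : Set ℝ) : Prop :=
  ∀ r : ℝ, 0 < r → ∀ ε : ℝ, 0 < ε → ∃ e ∈ s, |e - r| < ε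

/-- `X` is irreducible: any two words of the language can be joined inside it. -/
def IrreducibleShift (X : Set Point) : Prop :=
  ∀ u ∈ language X, ∀ v ∈ language X, ∃ w : List ℕ, u ++ w ++ v ∈ language X

/-- `w` is intrinsically synchronising for `X`. -/
def IntrinsicallySynchronising (X : Set Point) (w : List ℕ) : Prop :=
  ∀ v u : List ℕ, v ++ w ∈ language X → w ++ u ∈ language X →
    v ++ w ++ u ∈ language X

/-- `X` admits non-trivial `w`-overlaps: there is a word `v` in the language of `X`
with `|w| < |v| < 2|w|` having `w` both as a prefix and as a suffix. -/
def AdmitsNontrivialOverlaps (X : Set Point) (w : List ℕ) : Prop :=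
  ∃ v ∈ language X, w.length < v.length ∧ v.length < 2 * w.length ∧ w <+: v ∧ w <:+ v

/-- The full shift over the alphabet `A`. -/
def fullShift (A : Set ℕ) : Set Point := { x | ∀ i, x i ∈ A }

/-- The word `1 0^k 1`. -/
def gapWord (k : ℕ) : List ℕ := 1 :: (List.replicate k 0 ++ [1])

open Classical in
/-- The forbidden words of the `S`-gap shift. -/
noncomputable def sGapForbidden (S : Set ℕ) : Set (List ℕ) :=
  if S.Finite then
    { w | ∃ k : ℕ, k ∉ S ∧ k < sSup S ∧ w = gapWord k } ∪ {List.replicate (1 + sSup S) 0}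
  else
    { w | ∃ k : ℕ, k ∉ S ∧ w = gapWord k }

/-- The `S`-gap shift `X(S)` over the alphabet `{0, 1}`. -/
noncomputable def sGapShift (S : Set ℕ) : Set Point :=
  XF {0, 1} (sGapForbidden S)


/-! ### Word machinery -/

/-- The word of length `n` read off `x` starting at position `i`. -/
def word (x : Point) (i : ℤ) (n : ℕ) : List ℕ := List.ofFn fun j : Fin n => x (i + (j : ℕ))

@[simp] lemma word_length (x : Point) (i : ℤ) (n : ℕ) : (word x i n).length = n := by
  simp [word]

lemma word_get (x : Point) (i : ℤ) (n : ℕ) (j : Fin (word x i n).length) :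
    (word x i n).get j = x (i + ((j : ℕ) : ℤ)) := by
  exact List.get_ofFn (fun j : Fin n => x (i + (j : ℕ))) j

@[simp] lemma word_zero (x : Point) (i : ℤ) : word x i 0 = [] := by simp [word]

lemma word_cons (x : Point) (i : ℤ) (n : ℕ) :
    word x i (n + 1) = x i :: word x (i + 1) n := by
  simp only [word, List.ofFn_succ, Fin.val_succ]
  congr 1
  · norm_num
  · congr 1
    funext j
    congr 1
    push_cast
    ring

lemma word_append (x : Point) (i : ℤ) (m n : ℕ) :
    word x i (m + n) = word x i m ++ word x (i + (m : ℕ)) n := by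
  induction m generalizing i with
  | zero => simp
  | succ m ih =>
      have : m + 1 + n = (m + n) + 1 := by ring
      rw [this, word_cons, ih, word_cons, List.cons_append]
      congr 2
      push_cast
      ring

lemma word_one (x : Point) (i : ℤ) : word x i 1 = [x i] := by
  rw [word_cons, word_zero]

lemma word_succ (x : Point) (i : ℤ) (n : ℕ) :
    word x i (n + 1) = word x i n ++ [x (i + (n : ℕ))] := by
  rw [word_append, word_one]

lemma matchesAt_word (x : Point) (i : ℤ) (n : ℕ) : MatchesAt (word x i n) x i := by
  intro j
  rw [word_get]

lemma matchesAt_of_eq_word {w : List ℕ} {x : Point} {i : ℤ} {n : ℕ} (h : w = word x i n) :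
    MatchesAt w x i := by
  subst h; exact matchesAt_word x i n

lemma matchesAt_iff (w : List ℕ) (x : Point) (i : ℤ) :
    MatchesAt w x i ↔ w = word x i w.length := by
  constructor
  · intro h
    apply List.ext_get (by simp)
    intro j h1 h2
    have := h ⟨j, h1⟩
    simp only [List.get_eq_getElem] at this ⊢
    rw [← this]
    have := word_get x i w.length ⟨j, by simpa using h1⟩
    simp only [List.get_eq_getElem] at this
    rw [this]
  · exact matchesAt_of_eq_word

lemma word_mem_language {X : Set Point} {x : Point} (hx : x ∈ X) (i : ℤ) (n : ℕ) :
    word x i n ∈ language X :=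
  ⟨x, hx, i, matchesAt_word x i n⟩

lemma mem_language_iff {X : Set Point} {w : List ℕ} :
    w ∈ language X ↔ ∃ x ∈ X, ∃ i : ℤ, ∃ n : ℕ, w = word x i n := by
  constructor
  · rintro ⟨x, hx, i, h⟩
    exact ⟨x, hx, i, w.length, (matchesAt_iff w x i).1 h⟩
  · rintro ⟨x, hx, i, n, rfl⟩
    exact ⟨x, hx, i, matchesAt_word x i n⟩

lemma word_infix_word {x : Point} {i i' : ℤ} {n n' : ℕ}
    (h1 : i' ≤ i) (h2 : i + (n : ℤ) ≤ i' + (n' : ℤ)) :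
    word x i n <:+: word x i' n' := by
  set p : ℕ := (i - i').toNat with hp
  have hip : i = i' + (p : ℤ) := by
    rw [hp, Int.toNat_of_nonneg (by omega)]; ring
  set q : ℕ := (i' + (n' : ℤ) - (i + n)).toNat with hq
  have hq' : (q : ℤ) = i' + (n' : ℤ) - (i + n) := by
    rw [hq, Int.toNat_of_nonneg (by omega)]
  have hn' : n' = p + n + q := by omega
  refine ⟨word x i' p, word x (i + (n : ℤ)) q, ?_⟩
  have e2 : i' + ((p + n : ℕ) : ℤ) = i + (n : ℤ) := by push_cast; omega
  rw [hn', word_append, word_append, ← hip, e2]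

lemma language_infix_closed {X : Set Point} {w v : List ℕ}
    (hw : w ∈ language X) (hv : v <:+: w) : v ∈ language X := by
  obtain ⟨x, hx, i, n, rfl⟩ := mem_language_iff.1 hw
  obtain ⟨l, r, hlr⟩ := hv
  refine ⟨x, hx, i + l.length, ?_⟩
  intro j
  have hlen : l.length + (v.length + r.length) = n := by
    have := congrArg List.length hlr
    simpa using this
  have h1 : l.length + (j : ℕ) < (word x i n).length := by
    rw [word_length]
    have := j.isLt
    omega
  have hmain := matchesAt_word x i n ⟨l.length + (j : ℕ), h1⟩
  simp only [List.get_eq_getElem] at hmain ⊢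
  have h2 : (word x i n)[l.length + (j : ℕ)]'h1 = v[(j : ℕ)]'j.isLt := by
    rw [List.getElem_of_eq hlr.symm h1]
    rw [List.getElem_append_left (by simp)]
    rw [List.getElem_append_right (by omega)]
    congr 1
    omega
  rw [h2] at hmain
  rw [← hmain]
  congr 1
  push_cast
  ring
lemma mem_alphabet {X : Set Point} {x : Point} (hx : x ∈ X) (i : ℤ) : x i ∈ alphabet X :=
  ⟨x, hx, i, rfl⟩

lemma letters_mem {A : Set ℕ} {F : Set (List ℕ)} {w : List ℕ}
    (hw : w ∈ language (XF A F)) : ∀ b ∈ w, b ∈ A := by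
  obtain ⟨x, hx, i, n, rfl⟩ := mem_language_iff.1 hw
  intro b hb
  simp only [word, List.mem_ofFn] at hb
  obtain ⟨j, rfl⟩ := hb
  exact hx.1 _

/-- Cardinality of `B_n` over a finite alphabet. -/
lemma ncard_Bn_le {A : Set ℕ} {F : Set (List ℕ)} (hA : A.Finite) (n : ℕ) :
    (Bn (XF A F) n).ncard ≤ (A.ncard + 2) ^ n := by
  classical
  set T : Finset (List ℕ) :=
    (Fintype.piFinset (fun _ : Fin n => hA.toFinset)).image (fun f => List.ofFn f) with hT
  have hsub : Bn (XF A F) n ⊆ ↑T := by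
    rintro w ⟨hw, hlen⟩
    obtain ⟨x, hx, i, m, rfl⟩ := mem_language_iff.1 hw
    rw [word_length] at hlen
    subst hlen
    simp only [hT, Finset.coe_image, Set.mem_image, Finset.mem_coe, Fintype.mem_piFinset]
    exact ⟨fun j => x (i + (j : ℕ)), fun j => hA.mem_toFinset.2 (hx.1 _), rfl⟩
  calc (Bn (XF A F) n).ncard ≤ (↑T : Set (List ℕ)).ncard :=
        Set.ncard_le_ncard hsub (T.finite_toSet)
    _ = T.card := Set.ncard_coe_finset T
    _ ≤ (Fintype.piFinset (fun _ : Fin n => hA.toFinset)).card := Finset.card_image_le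
    _ = hA.toFinset.card ^ n := by rw [Fintype.card_piFinset]; simp
    _ ≤ (A.ncard + 2) ^ n := by
        apply Nat.pow_le_pow_left
        rw [Set.ncard_eq_toFinset_card A hA]
        omega

lemma Bn_finite {X : Set Point} (hX : IsShiftSpace X) (n : ℕ) : (Bn X n).Finite := by
  obtain ⟨A, hA, F, rfl⟩ := hX
  classical
  set T : Finset (List ℕ) :=
    (Fintype.piFinset (fun _ : Fin n => hA.toFinset)).image (fun f => List.ofFn f) with hT
  apply Set.Finite.subset T.finite_toSet
  rintro w ⟨hw, hlen⟩
  obtain ⟨x, hx, i, m, rfl⟩ := mem_language_iff.1 hw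
  rw [word_length] at hlen
  subst hlen
  simp only [hT, Finset.coe_image, Set.mem_image, Finset.mem_coe, Fintype.mem_piFinset]
  exact ⟨fun j => x (i + (j : ℕ)), fun j => hA.mem_toFinset.2 (hx.1 _), rfl⟩

lemma ncard_biUnion_le {α : Type*} (n : ℕ) (g : ℕ → Set α) :
    (⋃ m ∈ Finset.range n, g m).ncard ≤ ∑ m ∈ Finset.range n, (g m).ncard := by
  induction n with
  | zero => simp
  | succ n ih =>
      rw [Finset.range_add_one]
      rw [Finset.set_biUnion_insert, Finset.sum_insert (by simp)]
      calc (g n ∪ ⋃ m ∈ Finset.range n, g m).ncard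
          ≤ (g n).ncard + (⋃ m ∈ Finset.range n, g m).ncard := Set.ncard_union_le _ _
        _ ≤ _ := by omega


/-! ### Entropy and subexponential growth -/

/-- `X` has subexponential word growth. -/
def Subexp (X : Set Point) : Prop :=
  ∀ ε : ℝ, 0 < ε → ∃ C : ℝ, 1 ≤ C ∧
    ∀ n : ℕ, ((Bn X n).ncard : ℝ) ≤ C * (2 : ℝ) ^ (ε * n)

lemma entropy_fun_nonneg (X : Set Point) (n : ℕ) :
    0 ≤ Real.logb 2 ((Bn X n).ncard : ℝ) / (n : ℝ) := by
  rcases Nat.eq_zero_or_pos (Bn X n).ncard with h | h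
  · simp [h, Real.logb]
  · apply div_nonneg _ (by positivity)
    apply Real.logb_nonneg one_lt_two
    exact_mod_cast h

lemma entropy_fun_bounded {X : Set Point} (hX : IsShiftSpace X) :
    ∃ K : ℝ, ∀ n : ℕ, Real.logb 2 ((Bn X n).ncard : ℝ) / (n : ℝ) ≤ K := by
  obtain ⟨A, hA, F, hXF⟩ := hX
  refine ⟨Real.logb 2 ((A.ncard + 2 : ℕ) : ℝ), fun n => ?_⟩
  have hM : (1 : ℝ) ≤ ((A.ncard + 2 : ℕ) : ℝ) := by exact_mod_cast by omega
  have hKnn : 0 ≤ Real.logb 2 ((A.ncard + 2 : ℕ) : ℝ) := Real.logb_nonneg one_lt_two hM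
  rcases Nat.eq_zero_or_pos n with rfl | hn
  · simpa using hKnn
  rcases Nat.eq_zero_or_pos (Bn X n).ncard with h | h
  · simp only [h, Nat.cast_zero, Real.logb_zero, zero_div]
    exact hKnn
  have hcard : ((Bn X n).ncard : ℝ) ≤ (((A.ncard + 2) ^ n : ℕ) : ℝ) := by
    exact_mod_cast hXF ▸ ncard_Bn_le hA n
  have hlog : Real.logb 2 ((Bn X n).ncard : ℝ) ≤ n * Real.logb 2 ((A.ncard + 2 : ℕ) : ℝ) := by
    calc Real.logb 2 ((Bn X n).ncard : ℝ) ≤ Real.logb 2 ((((A.ncard + 2) ^ n : ℕ)) : ℝ) := by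
          apply (Real.logb_le_logb one_lt_two (by exact_mod_cast h) (by positivity)).2 hcard
      _ = n * Real.logb 2 ((A.ncard + 2 : ℕ) : ℝ) := by
          push_cast
          rw [Real.logb_pow]
    
  have hnpos : (0:ℝ) < (n : ℝ) := by exact_mod_cast hn
  rw [div_le_iff₀ hnpos]
  calc Real.logb 2 ((Bn X n).ncard : ℝ) ≤ n * Real.logb 2 ((A.ncard + 2 : ℕ) : ℝ) := hlog
    _ = Real.logb 2 ((A.ncard + 2 : ℕ) : ℝ) * n := mul_comm _ _

theorem entropy_eq_zero_iff_subexp {X : Set Point} (hX : IsShiftSpace X) :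
    entropy X = 0 ↔ Subexp X := by
  set f : ℕ → ℝ := fun n => Real.logb 2 ((Bn X n).ncard : ℝ) / (n : ℝ) with hf
  obtain ⟨K, hK⟩ := entropy_fun_bounded hX
  have hbddAbove : IsBoundedUnder (· ≤ ·) atTop f :=
    Filter.isBoundedUnder_of ⟨K, fun n => hK n⟩
  have hbddBelow : IsBoundedUnder (· ≥ ·) atTop f :=
    Filter.isBoundedUnder_of ⟨0, fun n => entropy_fun_nonneg X n⟩
  constructor
  · intro h0 ε hε
    have hlim : limsup f atTop < ε := by rw [show limsup f atTop = entropy X from rfl, h0]; exact hε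
    have hev := Filter.eventually_lt_of_limsup_lt hlim hbddAbove
    obtain ⟨M₀, hM₀⟩ := Filter.eventually_atTop.1 hev
    set M₁ := max M₀ 1 with hM₁
    have hS0 : (0:ℝ) ≤ ∑ m ∈ Finset.range M₁, ((Bn X m).ncard : ℝ) :=
      Finset.sum_nonneg (fun m _ => Nat.cast_nonneg _)
    refine ⟨1 + ∑ m ∈ Finset.range M₁, ((Bn X m).ncard : ℝ), by linarith, fun n => ?_⟩
    have hrpow1 : (1:ℝ) ≤ (2:ℝ) ^ (ε * n) := by
      rw [show (1:ℝ) = (2:ℝ) ^ (0:ℝ) from (Real.rpow_zero 2).symm]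
      apply Real.rpow_le_rpow_of_exponent_le one_le_two (by positivity)
    rcases lt_or_ge n M₁ with hn | hn
    · have : ((Bn X n).ncard : ℝ) ≤ ∑ m ∈ Finset.range M₁, ((Bn X m).ncard : ℝ) := by
        apply Finset.single_le_sum (f := fun m => ((Bn X m).ncard : ℝ))
          (fun m _ => Nat.cast_nonneg _)
        exact Finset.mem_range.2 hn
      have hS : (0:ℝ) ≤ ∑ m ∈ Finset.range M₁, ((Bn X m).ncard : ℝ) :=
        Finset.sum_nonneg (fun m _ => Nat.cast_nonneg _)
      nlinarith [this, hrpow1, hS, mul_nonneg hS (le_trans zero_le_one hrpow1)]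
    · have hn1 : 1 ≤ n := le_trans (le_max_right _ _) hn
      have hfn : f n < ε := hM₀ n (le_trans (le_max_left _ _) hn)
      have hb : ((Bn X n).ncard : ℝ) ≤ (2:ℝ) ^ (ε * n) := by
        rcases Nat.eq_zero_or_pos (Bn X n).ncard with h | h
        · rw [h]
          simpa using le_trans zero_le_one hrpow1
        · have hpos : (0:ℝ) < ((Bn X n).ncard : ℝ) := by exact_mod_cast h
          rw [← Real.logb_le_iff_le_rpow one_lt_two hpos]
          have : Real.logb 2 ((Bn X n).ncard : ℝ) / (n:ℝ) < ε := hfn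
          have hnpos : (0:ℝ) < (n:ℝ) := by exact_mod_cast hn1
          rw [div_lt_iff₀ hnpos] at this
          linarith [this]
      have hS : (0:ℝ) ≤ ∑ m ∈ Finset.range M₁, ((Bn X m).ncard : ℝ) :=
        Finset.sum_nonneg (fun m _ => Nat.cast_nonneg _)
      nlinarith [hb, hrpow1, hS, mul_nonneg hS (le_trans zero_le_one hrpow1)]
  · intro hsub
    have hge : 0 ≤ limsup f atTop :=
      Filter.le_limsup_of_frequently_le
        (Filter.Frequently.of_forall (fun n => entropy_fun_nonneg X n)) hbddAbove
    have hle : limsup f atTop ≤ 0 := by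
      apply le_of_forall_pos_le_add
      intro ε hε
      rw [zero_add]
      obtain ⟨C, hC1, hC⟩ := hsub (ε/2) (by linarith)
      apply Filter.limsup_le_of_le hbddBelow.isCoboundedUnder_le
      have hev1 : ∀ᶠ n : ℕ in atTop, Real.logb 2 C / (n:ℝ) < ε/2 :=
        (tendsto_const_div_atTop_nhds_zero_nat (Real.logb 2 C)).eventually_lt_const (by linarith)
      filter_upwards [hev1, Filter.eventually_ge_atTop 1] with n h1 hn1
      rcases Nat.eq_zero_or_pos (Bn X n).ncard with h | h
      · simp only [hf, h]
        simpa [Real.logb] using le_of_lt hε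
      · have hpos : (0:ℝ) < ((Bn X n).ncard : ℝ) := by exact_mod_cast h
        have hnpos : (0:ℝ) < (n:ℝ) := by exact_mod_cast hn1
        have hCpos : (0:ℝ) < C := by linarith
        have hlog : Real.logb 2 ((Bn X n).ncard : ℝ) ≤ Real.logb 2 C + (ε/2) * n := by
          calc Real.logb 2 ((Bn X n).ncard : ℝ)
              ≤ Real.logb 2 (C * (2:ℝ) ^ ((ε/2) * n)) := by
                apply (Real.logb_le_logb one_lt_two hpos (by positivity)).2 (hC n)
            _ = Real.logb 2 C + (ε/2) * n := by
                rw [Real.logb_mul (ne_of_gt hCpos) (by positivity),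
                  Real.logb_rpow (by norm_num) (by norm_num)]
        have : f n ≤ Real.logb 2 C / n + ε/2 := by
          simp only [hf]
          rw [div_le_iff₀ hnpos]
          calc Real.logb 2 ((Bn X n).ncard : ℝ) ≤ Real.logb 2 C + (ε/2) * n := hlog
            _ = (Real.logb 2 C / n + ε/2) * n := by field_simp
        calc f n ≤ Real.logb 2 C / n + ε/2 := this
          _ ≤ ε/2 + ε/2 := by linarith
          _ = ε := by ring
    exact le_antisymm hle hge


/-! ### Shift invariance -/

def shiftIter (k : ℤ) (x : Point) : Point := fun i => x (i + k)

lemma matchesAt_shiftIter {w : List ℕ} {x : Point} {i k : ℤ} :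
    MatchesAt w (shiftIter k x) i ↔ MatchesAt w x (i + k) := by
  constructor <;> intro h j <;> have := h j <;>
    simpa [shiftIter, add_right_comm] using this

lemma shiftIter_mem_XF {A : Set ℕ} {F : Set (List ℕ)} {x : Point}
    (hx : x ∈ XF A F) (k : ℤ) : shiftIter k x ∈ XF A F := by
  refine ⟨fun i => hx.1 (i + k), fun w hw hocc => hx.2 w hw ?_⟩
  obtain ⟨i, hi⟩ := hocc
  exact ⟨i + k, matchesAt_shiftIter.1 hi⟩

lemma word_shiftIter (x : Point) (k i : ℤ) (n : ℕ) :
    word (shiftIter k x) i n = word x (i + k) n := by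
  simp only [word, shiftIter]
  congr 1
  funext j
  congr 1
  ring

/-- A sliding block code commutes with the shift on a shift-invariant domain. -/
lemma sbc_shiftIter {X : Set Point} {φ : Point → Point}
    {m n : ℕ} {Φ : List ℕ → ℕ}
    (hΦ : ∀ x ∈ X, ∀ i : ℤ, φ x i = Φ (List.ofFn fun j : Fin (m + n + 1) =>
      x (i - (m : ℤ) + ((j : ℕ) : ℤ))))
    {x : Point} (hx : x ∈ X) (k : ℤ) (hxk : shiftIter k x ∈ X) (i : ℤ) :
    φ (shiftIter k x) i = φ x (i + k) := by
  rw [hΦ _ hxk i, hΦ _ hx (i + k)]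
  congr 1
  congr 1
  funext j
  simp only [shiftIter]
  congr 1
  ring

/-! ### Compactness of shift spaces -/

lemma isClosed_XF (A : Set ℕ) (F : Set (List ℕ)) : IsClosed (XF A F) := by
  have h : XF A F = (⋂ i : ℤ, (fun x : Point => x i) ⁻¹' A) ∩
      (⋂ w ∈ F, {x : Point | occursIn w x}ᶜ) := by
    ext x
    simp only [XF, Set.mem_setOf_eq, Set.mem_inter_iff, Set.mem_iInter, Set.mem_preimage,
      Set.mem_compl_iff]
  rw [h]
  apply IsClosed.inter
  · exact isClosed_iInter (fun i => (isClosed_discrete A).preimage (continuous_apply i))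
  · refine isClosed_biInter (fun w _ => ?_)
    rw [isClosed_compl_iff]
    have h2 : {x : Point | occursIn w x} =
        ⋃ i : ℤ, ⋂ j : Fin w.length, (fun x : Point => x (i + ((j : ℕ) : ℤ))) ⁻¹' {w.get j} := by
      ext x
      simp only [occursIn, MatchesAt, Set.mem_setOf_eq, Set.mem_iUnion, Set.mem_iInter,
        Set.mem_preimage, Set.mem_singleton_iff]
    rw [h2]
    exact isOpen_iUnion fun i => isOpen_iInter_of_finite fun j =>
      (isOpen_discrete _).preimage (continuous_apply _)

lemma isCompact_XF {A : Set ℕ} (hA : A.Finite) (F : Set (List ℕ)) : IsCompact (XF A F) := by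
  apply IsCompact.of_isClosed_subset (isCompact_univ_pi (fun _ : ℤ => hA.isCompact))
    (isClosed_XF A F)
  intro x hx
  rw [Set.mem_univ_pi]
  exact fun i => hx.1 i

/-- Membership of finite-agreement sets in the neighbourhood filter of a pair of points. -/
lemma agree_mem_nhds (q : Point × Point) (J : Finset ℤ) :
    {z : Point × Point | ∀ j ∈ J, z.1 j = q.1 j ∧ z.2 j = q.2 j} ∈ nhds q := by
  have hopen : IsOpen {z : Point × Point | ∀ j ∈ J, z.1 j = q.1 j ∧ z.2 j = q.2 j} := by
    have h : {z : Point × Point | ∀ j ∈ J, z.1 j = q.1 j ∧ z.2 j = q.2 j} =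
        ⋂ j ∈ J, ((fun z : Point × Point => z.1 j) ⁻¹' {q.1 j} ∩
          (fun z : Point × Point => z.2 j) ⁻¹' {q.2 j}) := by
      ext z
      simp only [Set.mem_setOf_eq, Set.mem_iInter, Set.mem_inter_iff, Set.mem_preimage,
        Set.mem_singleton_iff]
    rw [h]
    refine isOpen_biInter_finset (fun j _ => IsOpen.inter ?_ ?_)
    · exact (isOpen_discrete _).preimage ((continuous_apply j).comp continuous_fst)
    · exact (isOpen_discrete _).preimage ((continuous_apply j).comp continuous_snd)
  exact hopen.mem_nhds (fun j _ => ⟨rfl, rfl⟩)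

/-- The key compactness lemma: an injective sliding block code admits an inverse window. -/
lemma exists_inverse_window {A : Set ℕ} (hA : A.Finite) (F : Set (List ℕ))
    {Y : Set Point} {φ : Point → Point}
    (hsbc : IsSlidingBlockCode (XF A F) Y φ) (hinj : Set.InjOn φ (XF A F)) :
    ∃ N : ℕ, ∀ x ∈ XF A F, ∀ x' ∈ XF A F,
      (∀ j : ℤ, -(N : ℤ) ≤ j → j ≤ (N : ℤ) → φ x j = φ x' j) → x 0 = x' 0 := by
  obtain ⟨hmaps, m, n, Φ, hΦ⟩ := hsbc
  by_contra hcon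
  push_neg at hcon
  choose xs hxs xs' hxs' h using hcon
  have hagree := fun N => (h N).1
  have hne := fun N => (h N).2
  set X := XF A F with hX
  set p : ℕ → Point × Point := fun N => (xs N, xs' N) with hp
  have hK : IsCompact (X ×ˢ X) := (isCompact_XF hA F).prod (isCompact_XF hA F)
  have hle : Filter.map p atTop ≤ Filter.principal (X ×ˢ X) := by
    rw [Filter.le_principal_iff, Filter.mem_map]
    filter_upwards with N
    exact ⟨hxs N, hxs' N⟩
  obtain ⟨q, hqK, hq⟩ := hK.exists_clusterPt hle
  have hfreq : ∀ (J : Finset ℤ), ∃ᶠ N in atTop, ∀ j ∈ J, xs N j = q.1 j ∧ xs' N j = q.2 j := by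
    intro J
    rw [clusterPt_iff_nonempty] at hq
    rw [Filter.frequently_atTop]
    intro N₀
    have hV : p '' Set.Ici N₀ ∈ Filter.map p atTop := by
      rw [Filter.mem_map]
      filter_upwards [Filter.eventually_ge_atTop N₀] with N hN
      exact ⟨N, hN, rfl⟩
    obtain ⟨z, hz1, hz2⟩ := hq (agree_mem_nhds q J) hV
    obtain ⟨N, hN, rfl⟩ := hz2
    exact ⟨N, hN, hz1⟩
  -- q = (x, x') with x 0 ≠ x' 0 and φ x = φ x'
  have hx : q.1 ∈ X := hqK.1
  have hx' : q.2 ∈ X := hqK.2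
  have hne0 : q.1 0 ≠ q.2 0 := by
    obtain ⟨N, -, hN⟩ := Filter.frequently_atTop.1 (hfreq {0}) 0
    simp only [Finset.mem_singleton, forall_eq] at hN
    rw [← hN.1, ← hN.2]
    exact hne N
  have hφeq : φ q.1 = φ q.2 := by
    funext i
    set J : Finset ℤ := Finset.Icc (i - (m : ℤ)) (i + (n : ℤ)) with hJ
    obtain ⟨N, hNi, hN⟩ := Filter.frequently_atTop.1 (hfreq J) (i.natAbs)
    have hwin : ∀ j : Fin (m + n + 1),
        (xs N) (i - (m : ℤ) + ((j : ℕ) : ℤ)) = q.1 (i - (m : ℤ) + ((j : ℕ) : ℤ)) ∧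
        (xs' N) (i - (m : ℤ) + ((j : ℕ) : ℤ)) = q.2 (i - (m : ℤ) + ((j : ℕ) : ℤ)) := by
      intro j
      have hmem : i - (m : ℤ) + ((j : ℕ) : ℤ) ∈ J := by
        rw [hJ, Finset.mem_Icc]
        have := j.isLt
        omega
      exact hN _ hmem
    have h1 : φ q.1 i = φ (xs N) i := by
      rw [hΦ _ hx i, hΦ _ (hxs N) i]
      congr 2
      funext j
      exact (hwin j).1.symm
    have h2 : φ q.2 i = φ (xs' N) i := by
      rw [hΦ _ hx' i, hΦ _ (hxs' N) i]
      congr 2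
      funext j
      exact (hwin j).2.symm
    rw [h1, h2]
    apply hagree N
    · omega
    · omega
  exact hne0 (congrFun (hinj hx hx' hφeq) 0)


/-! ### Conjugacy preserves subexponential growth -/

lemma subexp_of_le_shift {X Y : Set Point} (c : ℕ)
    (hle : ∀ L : ℕ, (Bn Y L).ncard ≤ (Bn X (L + c)).ncard) : Subexp X → Subexp Y := by
  intro h ε hε
  obtain ⟨C, hC1, hC⟩ := h ε hε
  have h2c : (1:ℝ) ≤ (2:ℝ) ^ (ε * c) := by
    rw [← Real.rpow_zero 2]
    exact Real.rpow_le_rpow_of_exponent_le one_le_two (by positivity)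
  refine ⟨C * (2:ℝ) ^ (ε * c), by nlinarith, fun L => ?_⟩
  calc ((Bn Y L).ncard : ℝ) ≤ ((Bn X (L + c)).ncard : ℝ) := by exact_mod_cast hle L
    _ ≤ C * (2:ℝ) ^ (ε * ((L + c : ℕ) : ℝ)) := hC (L + c)
    _ = (C * (2:ℝ) ^ (ε * c)) * (2:ℝ) ^ (ε * L) := by
        push_cast
        rw [mul_add, Real.rpow_add (by norm_num)]
        ring

/-- Forward counting: words of `Y` are images of words of `X`. -/
lemma bn_le_of_sbc {X Y : Set Point} (hXs : IsShiftSpace X)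
    {φ : Point → Point} (hsbc : IsSlidingBlockCode X Y φ) (hsurj : Set.SurjOn φ X Y) :
    ∃ c : ℕ, ∀ L : ℕ, (Bn Y L).ncard ≤ (Bn X (L + c)).ncard := by
  obtain ⟨hmaps, m, n, Φ, hΦ⟩ := hsbc
  refine ⟨m + n, fun L => ?_⟩
  set G : List ℕ → List ℕ := fun v =>
    List.ofFn (fun j : Fin (v.length - (m + n)) =>
      Φ (List.ofFn (fun j' : Fin (m + n + 1) => v.getD ((j : ℕ) + (j' : ℕ)) 0))) with hG
  have hsub : Bn Y L ⊆ G '' (Bn X (L + (m + n))) := by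
    rintro w' ⟨hw', hlen⟩
    obtain ⟨y, hy, i, L', rfl⟩ := mem_language_iff.1 hw'
    rw [word_length] at hlen
    have hlen' : L = L' := hlen.symm
    subst hlen'
    obtain ⟨x, hx, rfl⟩ := hsurj hy
    set v : List ℕ := word x (i - (m : ℤ)) (L + (m + n)) with hv
    refine ⟨v, ⟨word_mem_language hx _ _, word_length _ _ _⟩, ?_⟩
    have hvlen : v.length = L + (m + n) := word_length _ _ _
    apply List.ext_get
    · simp [hG, hvlen]
    intro j h1 h2
    have hj : j < L := by simpa [hG, hvlen] using h1
    simp only [hG, List.get_eq_getElem, List.getElem_ofFn]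
    have hgoal : (word (φ x) i L)[j]'h2 = φ x (i + (j : ℕ)) := by
      have := word_get (φ x) i L ⟨j, h2⟩
      simpa using this
    rw [hgoal, hΦ _ hx (i + (j : ℕ))]
    congr 1
    apply List.ext_get (by simp)
    intro j' h1' h2'
    have hj' : j' < m + n + 1 := by simpa using h1'
    simp only [List.get_eq_getElem, List.getElem_ofFn]
    have hlt2 : j + j' < (word x (i - (m : ℤ)) (L + (m + n))).length := by
      rw [word_length]; omega
    have hvv : v.getD (j + j') 0 = x ((i - (m : ℤ)) + ((j + j' : ℕ) : ℤ)) := by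
      rw [hv, List.getD_eq_getElem _ 0 hlt2]
      have := word_get x (i - (m : ℤ)) (L + (m + n)) ⟨j + j', hlt2⟩
      simpa using this
    rw [hvv]
    congr 1
    push_cast
    ring
  calc (Bn Y L).ncard ≤ (G '' (Bn X (L + (m + n)))).ncard :=
        Set.ncard_le_ncard hsub ((Bn_finite hXs _).image _)
    _ ≤ (Bn X (L + (m + n))).ncard := Set.ncard_image_le (Bn_finite hXs _)

/-- Backward counting for a conjugacy, via the inverse window. -/
lemma bn_le_of_conj_inv {A : Set ℕ} (hA : A.Finite) (F : Set (List ℕ)) {Y : Set Point}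
    (hYs : IsShiftSpace Y)
    {φ : Point → Point} (hsbc : IsSlidingBlockCode (XF A F) Y φ)
    (hbij : Set.BijOn φ (XF A F) Y) :
    ∃ c : ℕ, ∀ L : ℕ, (Bn (XF A F) L).ncard ≤ (Bn Y (L + c)).ncard := by
  classical
  set X := XF A F with hX
  obtain ⟨N, hN⟩ := exists_inverse_window hA F hsbc hbij.injOn
  obtain ⟨hmaps, m, n, Φ, hΦ⟩ := hsbc
  -- the window property at every coordinate
  have hwin : ∀ x ∈ X, ∀ x' ∈ X, ∀ i : ℤ,
      (∀ j : ℤ, i - N ≤ j → j ≤ i + N → φ x j = φ x' j) → x i = x' i := by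
    intro x hx x' hx' i hagree
    have hxi : shiftIter i x ∈ X := shiftIter_mem_XF hx i
    have hxi' : shiftIter i x' ∈ X := shiftIter_mem_XF hx' i
    have := hN _ hxi _ hxi' (fun j hj1 hj2 => by
      rw [sbc_shiftIter hΦ hx i hxi j, sbc_shiftIter hΦ hx' i hxi' j]
      exact hagree (j + i) (by omega) (by omega))
    simpa [shiftIter] using this
  refine ⟨2 * N, fun L => ?_⟩
  set Fm : List ℕ → List ℕ := fun v =>
    if h : ∃ x ∈ X, v = word (φ x) 0 v.length then
      List.ofFn (fun j : Fin (v.length - 2 * N) => h.choose (((j : ℕ) : ℤ) + (N : ℤ)))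
    else [] with hFm
  have hsub : Bn X L ⊆ Fm '' (Bn Y (L + 2 * N)) := by
    rintro w ⟨hw, hlen⟩
    obtain ⟨x, hx, i, L', rfl⟩ := mem_language_iff.1 hw
    rw [word_length] at hlen
    have hlen' : L = L' := hlen.symm
    subst hlen'
    set x₀ : Point := shiftIter (i - (N : ℤ)) x with hx₀
    have hx₀X : x₀ ∈ X := shiftIter_mem_XF hx _
    set v : List ℕ := word (φ x₀) 0 (L + 2 * N) with hv
    have hvlen : v.length = L + 2 * N := word_length _ _ _
    have hvY : v ∈ Bn Y (L + 2 * N) := ⟨word_mem_language (hmaps hx₀X) _ _, hvlen⟩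
    refine ⟨v, hvY, ?_⟩
    have hex : ∃ x' ∈ X, v = word (φ x') 0 v.length := ⟨x₀, hx₀X, by rw [hvlen]⟩
    obtain ⟨hc1, hc2⟩ := hex.choose_spec
    have hagree₀ : ∀ j : ℤ, 0 ≤ j → j < ((L + 2 * N : ℕ) : ℤ) →
        φ hex.choose j = φ x₀ j := by
      intro j hj1 hj2
      have h1 := matchesAt_of_eq_word hc2 ⟨j.toNat, by rw [hvlen]; omega⟩
      have h2 := matchesAt_of_eq_word (show v = word (φ x₀) 0 v.length by rw [hvlen]) ⟨j.toNat, by rw [hvlen]; omega⟩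
      rw [← h2] at h1
      have hjt : ((j.toNat : ℕ) : ℤ) = j := Int.toNat_of_nonneg hj1
      simpa [hjt] using h1
    have hval : ∀ j : ℕ, j < L → hex.choose (((j : ℕ) : ℤ) + (N : ℤ)) = x (i + (j : ℕ)) := by
      intro j hj
      have := hwin _ hc1 _ hx₀X ((j : ℤ) + N) (fun j' hj1' hj2' => by
        apply hagree₀ j' (by omega) (by push_cast; omega))
      rw [this]
      simp only [hx₀, shiftIter]
      congr 1
      ring
    rw [hFm]
    simp only [dif_pos hex]
    apply List.ext_get
    · simp [hvlen]
    intro j h1 h2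
    have hj : j < L := by simpa [hvlen] using h1
    simp only [List.get_eq_getElem, List.getElem_ofFn]
    have := word_get x i L ⟨j, h2⟩
    simp only [List.get_eq_getElem] at this
    erw [this]
    exact hval j hj
  calc (Bn X L).ncard ≤ (Fm '' (Bn Y (L + 2 * N))).ncard :=
        Set.ncard_le_ncard hsub ((Bn_finite hYs _).image Fm)
    _ ≤ (Bn Y (L + 2 * N)).ncard := Set.ncard_image_le (Bn_finite hYs _)


/-! ### Symbol expansions: word surgery -/

def contract (dia : ℕ) (w : List ℕ) : List ℕ := w.filter (fun b => decide (b ≠ dia))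

def expandW (a dia : ℕ) (w : List ℕ) : List ℕ :=
  w.flatMap (fun b => if b = a then [a, dia] else [b])

lemma matchesAt_singleton {b : ℕ} {x : Point} {i : ℤ} :
    MatchesAt [b] x i ↔ x i = b := by
  constructor
  · intro h
    have := h ⟨0, by simp⟩
    simpa using this
  · intro h j
    have hj : (j : ℕ) = 0 := by
      have h := j.isLt
      simp only [List.length_singleton] at h
      omega
    simp [hj, h]

@[simp] lemma contract_nil (dia : ℕ) : contract dia [] = [] := rfl

lemma contract_append (dia : ℕ) (l1 l2 : List ℕ) :
    contract dia (l1 ++ l2) = contract dia l1 ++ contract dia l2 :=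
  List.filter_append _ _

lemma contract_cons_ne (dia b : ℕ) (hb : b ≠ dia) (l : List ℕ) :
    contract dia (b :: l) = b :: contract dia l := by
  simp [contract, hb]

lemma contract_cons_dia (dia : ℕ) (l : List ℕ) :
    contract dia (dia :: l) = contract dia l := by
  simp [contract]

@[simp] lemma expandW_nil (a dia : ℕ) : expandW a dia [] = [] := rfl

lemma expandW_cons (a dia b : ℕ) (l : List ℕ) :
    expandW a dia (b :: l) = (if b = a then [a, dia] else [b]) ++ expandW a dia l := by
  simp [expandW]

lemma expandW_append (a dia : ℕ) (l1 l2 : List ℕ) :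
    expandW a dia (l1 ++ l2) = expandW a dia l1 ++ expandW a dia l2 := by
  simp [expandW]

lemma expandW_length (a dia : ℕ) (w : List ℕ) :
    w.length ≤ (expandW a dia w).length ∧ (expandW a dia w).length ≤ 2 * w.length := by
  induction w with
  | nil => simp
  | cons b l ih =>
      rw [expandW_cons, List.length_append, List.length_cons]
      by_cases hb : b = a <;> simp [hb] <;> omega

lemma contract_expandW {a dia : ℕ} (had : a ≠ dia) (w : List ℕ) (hw : ∀ b ∈ w, b ≠ dia) :
    contract dia (expandW a dia w) = w := by
  induction w with
  | nil => simp
  | cons b l ih =>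
      rw [expandW_cons, contract_append]
      have hb : b ≠ dia := hw b (by simp)
      have ihl : contract dia (expandW a dia l) = l := ih (fun c hc => hw c (by simp [hc]))
      by_cases hba : b = a
      · subst hba
        rw [if_pos rfl, contract_cons_ne dia b hb, contract_cons_dia, contract_nil, ihl]
        rfl
      · rw [if_neg hba, contract_cons_ne dia b hb, contract_nil, ihl]
        rfl

/-- Reconstruction: a word satisfying the `a`/`dia` chain condition is determined by
its contraction and whether it starts with `dia`. -/
lemma reconstruct {a dia : ℕ} (had : a ≠ dia) :
    ∀ (w1 w2 : List ℕ), List.Chain' (fun p q => (p = a ↔ q = dia)) w1 →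
      List.Chain' (fun p q => (p = a ↔ q = dia)) w2 →
      w1.length = w2.length → contract dia w1 = contract dia w2 →
      (w1.head? = some dia ↔ w2.head? = some dia) → w1 = w2 := by
  intro w1
  induction w1 with
  | nil =>
      intro w2 _ _ hlen _ _
      exact (List.length_eq_zero_iff.1 hlen.symm).symm
  | cons p l1 ih =>
      intro w2 hc1 hc2 hlen hfil hflag
      obtain ⟨q, l2, rfl⟩ : ∃ q l2, w2 = q :: l2 := by
        cases w2 with
        | nil => simp at hlen
        | cons q l2 => exact ⟨q, l2, rfl⟩
      simp only [List.length_cons, Nat.add_right_cancel_iff] at hlen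
      by_cases hp : p = dia
      · have hq : q = dia := by
          have := hflag.1 (by simp [hp])
          simpa using this
        have htail1 : l1.head? ≠ some dia := by
          intro hhd
          cases l1 with
          | nil => simp at hhd
          | cons r1 l1' =>
              have hr1 : r1 = dia := by simpa using hhd
              have hiff := (List.isChain_cons_cons.1 hc1).1
              have hpa : p = a := hiff.2 hr1
              exact had (hpa ▸ hp)
        have htail2 : l2.head? ≠ some dia := by
          intro hhd
          cases l2 with
          | nil => simp at hhd
          | cons r2 l2' =>
              have hr2 : r2 = dia := by simpa using hhd
              have hiff := (List.isChain_cons_cons.1 hc2).1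
              have hqa : q = a := hiff.2 hr2
              exact had (hqa ▸ hq)
        have htl := ih l2 hc1.tail hc2.tail hlen
          (by rw [hp, hq, contract_cons_dia, contract_cons_dia] at hfil; exact hfil)
          (by constructor <;> intro h <;> [exact absurd h htail1; exact absurd h htail2])
        rw [hp, hq, htl]
      · have hq : q ≠ dia := by
          intro hq
          exact hp (by simpa using hflag.2 (by simp [hq]))
        rw [contract_cons_ne dia p hp, contract_cons_ne dia q hq] at hfil
        injection hfil with hpq hfil'
        subst hpq
        have hflag' : l1.head? = some dia ↔ l2.head? = some dia := by
          cases l1 with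
          | nil =>
              cases l2 with
              | nil => simp
              | cons r2 l2' => simp at hlen
          | cons r1 l1' =>
              cases l2 with
              | nil => simp at hlen
              | cons r2 l2' =>
                  have h1 := (List.isChain_cons_cons.1 hc1).1
                  have h2 := (List.isChain_cons_cons.1 hc2).1
                  simp only [List.head?_cons, Option.some_inj]
                  exact h1.symm.trans h2
        rw [ih l2 hc1.tail hc2.tail hlen hfil' hflag']


/-! ### Structure of symbol-expanded points -/

lemma replaced_props {a dia : ℕ} {x y : Point}
    (hrep : ReplacedBy [a] [a, dia] x y) :
    ∃ s t : ℤ → ℤ,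
      (∀ k, s (k + 1) = s k + 1) ∧
      (∀ k, t (k + 1) = t k + (if x (s k) = a then 2 else 1)) ∧
      (∀ k, y (t k) = x (s k)) ∧
      (∀ k, x (s k) = a → y (t k + 1) = dia) ∧
      (∀ m, ∃ k, t k ≤ m ∧ m < t (k + 1)) ∧
      (∀ k l, k ≤ l → t k + (l - k) ≤ t l) := by
  obtain ⟨-, s, t, hs, ht, hk⟩ := hrep
  refine ⟨s, t, ?_, ?_, ?_, ?_, ht, ?_⟩
  · intro k
    by_cases hm : MatchesAt [a] x (s k)
    · simpa using ((hk k).1 hm).1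
    · exact ((hk k).2 hm).1
  · intro k
    by_cases hm : x (s k) = a
    · rw [if_pos hm]
      simpa using ((hk k).1 (matchesAt_singleton.2 hm)).2.1
    · rw [if_neg hm]
      exact ((hk k).2 (fun h => hm (matchesAt_singleton.1 h))).2.1
  · intro k
    by_cases hm : x (s k) = a
    · have := ((hk k).1 (matchesAt_singleton.2 hm)).2.2 ⟨0, by simp⟩
      simpa [hm] using this
    · exact ((hk k).2 (fun h => hm (matchesAt_singleton.1 h))).2.2
  · intro k hm
    have := ((hk k).1 (matchesAt_singleton.2 hm)).2.2 ⟨1, by simp⟩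
    simpa using this
  · -- monotonicity
    have hstep : ∀ k, t k + 1 ≤ t (k + 1) := by
      intro k
      by_cases hm : x (s k) = a
      · have := ((hk k).1 (matchesAt_singleton.2 hm)).2.1
        simp only [List.length_cons, List.length_singleton] at this
        omega
      · have := ((hk k).2 (fun h => hm (matchesAt_singleton.1 h))).2.1
        omega
    intro k l hkl
    have H : ∀ d : ℕ, t k + d ≤ t (k + d) := by
      intro d
      induction d with
      | zero => simp
      | succ d ih =>
          have := hstep (k + d)
          push_cast
          push_cast at ih
          have heq : k + ((d : ℤ) + 1) = (k + d) + 1 := by ring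
          rw [heq]
          omega
    have := H (l - k).toNat
    rw [Int.toNat_of_nonneg (by omega)] at this
    simpa using this

/-- Full positional description of a symbol-expanded point. -/
lemma replaced_char {a dia : ℕ} (had : a ≠ dia) {x y : Point} (hxd : ∀ i, x i ≠ dia)
    (hrep : ReplacedBy [a] [a, dia] x y) :
    (∀ m, y m = dia → y (m - 1) = a) ∧ (∀ m, y m = a → y (m + 1) = dia) := by
  obtain ⟨s, t, hs, ht, hyt, hyd, hcov, hmono⟩ := replaced_props hrep
  have hchar : ∀ m, (∃ k, m = t k ∧ y m = x (s k)) ∨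
      (∃ k, m = t k + 1 ∧ x (s k) = a ∧ y m = dia) := by
    intro m
    obtain ⟨k, h1, h2⟩ := hcov m
    by_cases hm : x (s k) = a
    · rw [ht k, if_pos hm] at h2
      rcases (by omega : m = t k ∨ m = t k + 1) with h | h
      · exact Or.inl ⟨k, h, h ▸ hyt k⟩
      · exact Or.inr ⟨k, h, hm, h ▸ hyd k hm⟩
    · rw [ht k, if_neg hm] at h2
      have h : m = t k := by omega
      exact Or.inl ⟨k, h, h ▸ hyt k⟩
  constructor
  · intro m hdia
    rcases hchar m with ⟨k, h1, h2⟩ | ⟨k, h1, h2, h3⟩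
    · exact absurd (h2 ▸ hdia) (hxd (s k))
    · have : m - 1 = t k := by omega
      rw [this, hyt k, h2]
  · intro m ha
    rcases hchar m with ⟨k, h1, h2⟩ | ⟨k, h1, h2, h3⟩
    · subst h1
      exact hyd k (h2 ▸ ha)
    · exact absurd (h3 ▸ ha).symm had

lemma replaced_chain' {a dia : ℕ} (had : a ≠ dia) {x y : Point} (hxd : ∀ i, x i ≠ dia)
    (hrep : ReplacedBy [a] [a, dia] x y) (i : ℤ) (n : ℕ) :
    List.Chain' (fun p q => (p = a ↔ q = dia)) (word y i n) := by
  obtain ⟨P1, P2⟩ := replaced_char had hxd hrep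
  rw [List.Chain', List.isChain_iff_getElem]
  intro j hj
  rw [word_length] at hj
  have g1 := word_get y i n ⟨j, by rw [word_length]; omega⟩
  have g2 := word_get y i n ⟨j + 1, by rw [word_length]; omega⟩
  simp only [List.get_eq_getElem] at g1 g2 ⊢
  rw [g1, g2]
  constructor
  · intro h
    have := P2 _ h
    have heq : i + ((j:ℕ):ℤ) + 1 = i + (((j+1:ℕ)):ℤ) := by push_cast; ring
    rwa [heq] at this
  · intro h
    have := P1 _ h
    have heq : i + (((j+1:ℕ)):ℤ) - 1 = i + ((j:ℕ):ℤ) := by push_cast; ring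
    rwa [heq] at this

/-- Contraction of a block window equals the corresponding window of `x`. -/
lemma replaced_contract_word {a dia : ℕ} (had : a ≠ dia) {x y : Point} (hxd : ∀ i, x i ≠ dia)
    (hrep : ReplacedBy [a] [a, dia] x y) :
    ∀ s t : ℤ → ℤ,
      (∀ k, t (k + 1) = t k + (if x (s k) = a then 2 else 1)) →
      (∀ k, y (t k) = x (s k)) →
      (∀ k, x (s k) = a → y (t k + 1) = dia) →
      (∀ k l, k ≤ l → t k + (l - k) ≤ t l) →
      ∀ (k : ℤ) (j : ℕ),
        contract dia (word y (t k) ((t (k + (j:ℕ)) - t k).toNat)) =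
          word (fun l => x (s l)) k j := by
  intro s t ht hyt hyd hmono k j
  induction j with
  | zero => simp
  | succ j ih =>
      have hle1 : t k ≤ t (k + (j:ℕ)) := by have := hmono k (k + (j:ℕ)) (by omega); omega
      have hstep := ht (k + (j:ℕ))
      have heq : k + ((j:ℕ) + 1 : ℕ) = (k + (j:ℕ)) + 1 := by push_cast; ring
      by_cases hm : x (s (k + (j:ℕ))) = a
      · rw [if_pos hm] at hstep
        have hN : (t (k + ((j:ℕ)+1:ℕ)) - t k).toNat = (t (k + (j:ℕ)) - t k).toNat + 2 := by
          rw [heq, hstep]; omega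
        rw [hN, word_append, contract_append, ih]
        have htk : t k + (((t (k + (j:ℕ)) - t k).toNat : ℕ) : ℤ) = t (k + (j:ℕ)) := by
          rw [Int.toNat_of_nonneg (by omega)]; ring
        rw [htk]
        have hw2 : word y (t (k + (j:ℕ))) 2 = [a, dia] := by
          rw [show (2:ℕ) = 1 + 1 from rfl, word_cons, word_one, hyt, hm, hyd _ hm]
        rw [hw2]
        have : contract dia [a, dia] = [a] := by
          rw [contract_cons_ne dia a had, contract_cons_dia, contract_nil]
        rw [this, word_succ]
        congr 1
        simp [hm]
      · rw [if_neg hm] at hstep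
        have hN : (t (k + ((j:ℕ)+1:ℕ)) - t k).toNat = (t (k + (j:ℕ)) - t k).toNat + 1 := by
          rw [heq, hstep]; omega
        rw [hN, word_append, contract_append, ih]
        have htk : t k + (((t (k + (j:ℕ)) - t k).toNat : ℕ) : ℤ) = t (k + (j:ℕ)) := by
          rw [Int.toNat_of_nonneg (by omega)]; ring
        rw [htk, word_one, contract_cons_ne dia _ (hyt _ ▸ hxd _), contract_nil, word_succ]
        congr 1
        rw [hyt]

/-- The contraction of any window of a symbol-expanded point lies in the language of `X`. -/
lemma replaced_contract_mem {X : Set Point} {a dia : ℕ} (had : a ≠ dia)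
    {x y : Point} (hx : x ∈ X) (hxd : ∀ i, x i ≠ dia)
    (hrep : ReplacedBy [a] [a, dia] x y) (i : ℤ) (n : ℕ) :
    contract dia (word y i n) ∈ language X := by
  obtain ⟨s, t, hs, ht, hyt, hyd, hcov, hmono⟩ := replaced_props hrep
  obtain ⟨k1, hk1, -⟩ := hcov i
  obtain ⟨k2', hk2a, hk2b⟩ := hcov (i + (n : ℕ))
  set k2 : ℤ := k2' + 1 with hk2
  have hik2 : i + (n : ℤ) < t k2 := hk2b
  have hk1le : k1 ≤ k2 := by
    by_contra hcon
    push_neg at hcon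
    have := hmono k2 k1 (by omega)
    omega
  have hinfix : word y i n <:+: word y (t k1) ((t k2 - t k1).toNat) := by
    apply word_infix_word hk1
    rw [Int.toNat_of_nonneg (by have := hmono k1 k2 hk1le; omega)]
    omega
  have hfil := List.IsInfix.filter (fun b => decide (b ≠ dia)) hinfix
  have hk2eq : k1 + (((k2 - k1).toNat : ℕ) : ℤ) = k2 := by
    rw [Int.toNat_of_nonneg (by omega)]; ring
  have hcw := replaced_contract_word had hxd hrep s t ht hyt hyd hmono k1 (k2 - k1).toNat
  rw [hk2eq] at hcw
  have hword : word (fun l => x (s l)) k1 ((k2 - k1).toNat) ∈ language X := by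
    -- this equals a word of x
    obtain ⟨-, s', t', hs', -, -⟩ := hrep
    have hsk : ∀ (d : ℕ), s (k1 + (d:ℕ)) = s k1 + (d:ℕ) := by
      intro d
      induction d with
      | zero => simp
      | succ d ihd =>
          have heq : k1 + ((d:ℕ) + 1 : ℕ) = (k1 + (d:ℕ)) + 1 := by push_cast; ring
          rw [heq, hs, ihd]
          push_cast
          ring
    have : word (fun l => x (s l)) k1 ((k2 - k1).toNat) = word x (s k1) ((k2 - k1).toNat) := by
      apply List.ext_get (by simp)
      intro j h1 h2
      have ha := word_get (fun l => x (s l)) k1 ((k2 - k1).toNat) ⟨j, h1⟩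
      have hb := word_get x (s k1) ((k2 - k1).toNat) ⟨j, h2⟩
      simp only [List.get_eq_getElem] at ha hb ⊢
      rw [ha, hb, hsk j]
    rw [this]
    exact word_mem_language hx _ _
  rw [← hcw] at hword
  exact language_infix_closed hword hfil


/-! ### Construction of symbol expansions -/

/-- Signed count of `a`s in `x` between `0` and `k`. -/
noncomputable def aCount (a : ℕ) (x : Point) (k : ℤ) : ℤ :=
  if 0 ≤ k then ((word x 0 k.toNat).count a : ℤ) else -(((word x k (-k).toNat).count a : ℤ))

noncomputable def expT (a : ℕ) (x : Point) (k : ℤ) : ℤ := k + aCount a x k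

lemma expT_zero (a : ℕ) (x : Point) : expT a x 0 = 0 := by
  simp [expT, aCount]

lemma aCount_neg (a : ℕ) (x : Point) {j : ℤ} (hj : j ≤ 0) :
    aCount a x j = -(((word x j (-j).toNat).count a : ℤ)) := by
  rcases eq_or_lt_of_le hj with he | hl
  · subst he
    simp [aCount]
  · rw [aCount, if_neg (by omega)]

lemma expT_step (a : ℕ) (x : Point) (k : ℤ) :
    expT a x (k + 1) = expT a x k + (if x k = a then 2 else 1) := by
  have key : aCount a x (k + 1) = aCount a x k + (if x k = a then 1 else 0) := by
    rcases le_or_gt 0 k with hk | hk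
    · rw [aCount, if_pos (by omega), aCount, if_pos hk]
      have h1 : (k + 1).toNat = k.toNat + 1 := by omega
      rw [h1, word_succ]
      have h2 : ((k.toNat : ℕ) : ℤ) = k := Int.toNat_of_nonneg hk
      rw [List.count_append]
      simp only [zero_add, h2]
      by_cases hxk : x k = a <;>
        simp [List.count_cons, List.count_nil, hxk]
    · rw [aCount_neg a x (by omega : k + 1 ≤ 0), aCount_neg a x (by omega : k ≤ 0)]
      have h1 : (-k).toNat = (-(k+1)).toNat + 1 := by omega
      rw [h1, word_cons]
      rw [show k + 1 = k + (1:ℤ) from rfl] at *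
      have hcc : List.count a (x k :: word x (k + 1) ((-(k+1)).toNat)) =
          List.count a (word x (k + 1) ((-(k+1)).toNat)) + if x k = a then 1 else 0 := by
        by_cases hxk : x k = a <;> simp [List.count_cons, hxk]
      rw [hcc]
      by_cases hxk : x k = a <;> simp [hxk] <;> push_cast <;> ring
  rw [expT, expT, key]
  by_cases hxk : x k = a <;> simp [hxk] <;> ring

lemma expT_strictMono (a : ℕ) (x : Point) : StrictMono (expT a x) := by
  apply strictMono_int_of_lt_succ
  intro k
  rw [expT_step]
  by_cases hxk : x k = a <;> simp [hxk] <;> omega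

lemma expT_le_self {a : ℕ} {x : Point} {k : ℤ} (hk : k ≤ 0) : expT a x k ≤ k := by
  rw [expT, aCount]
  rcases eq_or_lt_of_le hk with he | hl
  · subst he; simp
  · rw [if_neg (by omega)]
    have : (0:ℤ) ≤ ((word x k (-k).toNat).count a : ℤ) := by positivity
    omega

lemma self_le_expT {a : ℕ} {x : Point} {k : ℤ} (hk : 0 ≤ k) : k ≤ expT a x k := by
  rw [expT, aCount, if_pos hk]
  have : (0:ℤ) ≤ ((word x 0 k.toNat).count a : ℤ) := by positivity
  omega

lemma expT_cover (a : ℕ) (x : Point) (m : ℤ) :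
    ∃ k, expT a x k ≤ m ∧ m < expT a x (k + 1) := by
  have hbdd : ∃ b : ℤ, ∀ z : ℤ, expT a x z ≤ m → z ≤ b := by
    refine ⟨max m 0, fun z hz => ?_⟩
    by_contra hcon
    push_neg at hcon
    have h0 : 0 ≤ z := by omega
    have := self_le_expT (a := a) (x := x) h0
    omega
  have hne : ∃ z : ℤ, expT a x z ≤ m := by
    rcases le_or_gt 0 m with hm | hm
    · exact ⟨0, by rw [expT_zero]; omega⟩
    · exact ⟨m, le_trans (expT_le_self (by omega)) le_rfl⟩
  obtain ⟨k, hk1, hk2⟩ := Int.exists_greatest_of_bdd hbdd hne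
  refine ⟨k, hk1, ?_⟩
  by_contra hcon
  push_neg at hcon
  have := hk2 (k + 1) hcon
  omega

open Classical in
noncomputable def expY (a dia : ℕ) (x : Point) : Point := fun m =>
  if h : ∃ k, expT a x k = m then x h.choose else dia

lemma expY_at (a dia : ℕ) (x : Point) (k : ℤ) : expY a dia x (expT a x k) = x k := by
  have h : ∃ k', expT a x k' = expT a x k := ⟨k, rfl⟩
  rw [expY, dif_pos h]
  have := h.choose_spec
  have hk : h.choose = k := (expT_strictMono a x).injective this
  rw [hk]

lemma expY_dia (a dia : ℕ) (x : Point) (k : ℤ) (hk : x k = a) :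
    expY a dia x (expT a x k + 1) = dia := by
  have h : ¬∃ k', expT a x k' = expT a x k + 1 := by
    rintro ⟨k', hk'⟩
    have hstep := expT_step a x k
    rw [if_pos hk] at hstep
    have h1 : expT a x k < expT a x k' := by omega
    have h2 : expT a x k' < expT a x (k + 1) := by omega
    have l1 : k < k' := (expT_strictMono a x).lt_iff_lt.1 h1
    have l2 : k' < k + 1 := (expT_strictMono a x).lt_iff_lt.1 h2
    omega
  rw [expY, dif_neg h]

lemma replacedBy_expY (a dia : ℕ) (x : Point) :
    ReplacedBy [a] [a, dia] x (expY a dia x) := by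
  refine ⟨by simp, id, expT a x, fun i _ => ⟨i, rfl⟩, expT_cover a x, fun k => ⟨?_, ?_⟩⟩
  · intro hm
    have hxk : x k = a := matchesAt_singleton.1 hm
    refine ⟨by simp [id], ?_, ?_⟩
    · rw [expT_step, if_pos hxk]
      simp
    · intro j
      have hj := j.isLt
      simp only [List.length_cons, List.length_singleton, List.length_nil] at hj
      have hcase : (j : ℕ) = 0 ∨ (j : ℕ) = 1 := by omega
      rcases hcase with h | h
      · have hj0 : j = (⟨0, by norm_num⟩ : Fin ([a, dia].length)) := Fin.ext (by simpa using h)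
        rw [hj0]
        show expY a dia x (expT a x k + ((0:ℕ):ℤ)) = a
        simp only [Nat.cast_zero, add_zero]
        rw [expY_at]
        exact hxk
      · have hj1 : j = (⟨1, by norm_num⟩ : Fin ([a, dia].length)) := Fin.ext (by simpa using h)
        rw [hj1]
        show expY a dia x (expT a x k + ((1:ℕ):ℤ)) = dia
        simp only [Nat.cast_one]
        exact expY_dia a dia x k hxk
  · intro hm
    have hxk : x k ≠ a := fun h => hm (matchesAt_singleton.2 h)
    refine ⟨by simp [id], ?_, ?_⟩
    · rw [expT_step, if_neg hxk]
    · show expY a dia x (expT a x k) = x (id k)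
      rw [expY_at]
      rfl

/-- Windows of `x` expand to windows of `expY`. -/
lemma expY_word (a dia : ℕ) (x : Point) (i : ℤ) (n : ℕ) :
    word (expY a dia x) (expT a x i) ((expT a x (i + (n:ℕ)) - expT a x i).toNat) =
      expandW a dia (word x i n) := by
  induction n with
  | zero => simp
  | succ n ih =>
      have hmono := expT_strictMono a x
      have hle1 : expT a x i ≤ expT a x (i + (n:ℕ)) := hmono.monotone (by omega)
      have hstep := expT_step a x (i + (n:ℕ))
      have heq : i + ((n:ℕ) + 1 : ℕ) = (i + (n:ℕ)) + 1 := by push_cast; ring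
      rw [word_succ, expandW_append]
      by_cases hm : x (i + (n:ℕ)) = a
      · rw [if_pos hm] at hstep
        have hN : (expT a x (i + ((n:ℕ)+1:ℕ)) - expT a x i).toNat =
            (expT a x (i + (n:ℕ)) - expT a x i).toNat + 2 := by
          rw [heq, hstep]; omega
        rw [hN, word_append, ih]
        congr 1
        have htk : expT a x i + (((expT a x (i + (n:ℕ)) - expT a x i).toNat : ℕ) : ℤ) =
            expT a x (i + (n:ℕ)) := by
          rw [Int.toNat_of_nonneg (by omega)]; ring
        rw [htk]
        rw [show (2:ℕ) = 1 + 1 from rfl, word_cons, word_one, expY_at]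
        have : expandW a dia [x (i + (n:ℕ))] = [a, dia] := by
          simp [expandW, hm]
        rw [this, hm, expY_dia a dia x _ hm]
      · rw [if_neg hm] at hstep
        have hN : (expT a x (i + ((n:ℕ)+1:ℕ)) - expT a x i).toNat =
            (expT a x (i + (n:ℕ)) - expT a x i).toNat + 1 := by
          rw [heq, hstep]; omega
        rw [hN, word_append, ih]
        congr 1
        have htk : expT a x i + (((expT a x (i + (n:ℕ)) - expT a x i).toNat : ℕ) : ℤ) =
            expT a x (i + (n:ℕ)) := by
          rw [Int.toNat_of_nonneg (by omega)]; ring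
        rw [htk, word_one, expY_at]
        simp [expandW, hm]


/-! ### Counting for symbol expansions -/

lemma lang_letters_alphabet {X : Set Point} {w : List ℕ} (hw : w ∈ language X) :
    ∀ b ∈ w, b ∈ alphabet X := by
  obtain ⟨x, hx, i, n, rfl⟩ := mem_language_iff.1 hw
  intro b hb
  simp only [word, List.mem_ofFn] at hb
  obtain ⟨j, rfl⟩ := hb
  exact mem_alphabet hx _

lemma langY_facts {X : Set Point} {a dia : ℕ} (ha : a ∈ alphabet X) (hdia : dia ∉ alphabet X)
    {w : List ℕ} (hw : w ∈ language (ReplaceWord [a] [a, dia] X)) :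
    List.Chain' (fun p q => (p = a ↔ q = dia)) w ∧ contract dia w ∈ language X := by
  obtain ⟨y, hy, i, L, rfl⟩ := mem_language_iff.1 hw
  obtain ⟨x, hx, hrep⟩ := hy
  have had : a ≠ dia := fun h => hdia (h ▸ ha)
  have hxd : ∀ i, x i ≠ dia := fun i h => hdia ⟨x, hx, i, h⟩
  exact ⟨replaced_chain' had hxd hrep i L, replaced_contract_mem had hx hxd hrep i L⟩

lemma bn_exp_fwd {X : Set Point} (hXs : IsShiftSpace X)
    {a dia : ℕ} (ha : a ∈ alphabet X) (hdia : dia ∉ alphabet X) (n : ℕ) :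
    (Bn (ReplaceWord [a] [a, dia] X) n).ncard ≤
      2 * ∑ m ∈ Finset.range (n + 1), (Bn X m).ncard := by
  classical
  have had : a ≠ dia := fun h => hdia (h ▸ ha)
  set Y := ReplaceWord [a] [a, dia] X with hY
  set U : Set (List ℕ) := ⋃ m ∈ Finset.range (n + 1), Bn X m with hU
  have hUfin : U.Finite :=
    Set.Finite.biUnion (Finset.range (n + 1)).finite_toSet (fun m _ => Bn_finite hXs m)
  set S1 : Set (List ℕ) := {w ∈ Bn Y n | w.head? = some dia} with hS1
  set S2 : Set (List ℕ) := {w ∈ Bn Y n | w.head? ≠ some dia} with hS2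
  have hmaps : ∀ w ∈ Bn Y n, contract dia w ∈ U := by
    rintro w ⟨hw, hlen⟩
    have := (langY_facts ha hdia hw).2
    rw [hU]
    simp only [Set.mem_iUnion]
    refine ⟨(contract dia w).length, ?_, this, rfl⟩
    simp only [Finset.mem_range]
    have hlf : (contract dia w).length ≤ w.length := List.length_filter_le _ _
    rw [hlen] at hlf
    omega
  have hinj : ∀ (S : Set (List ℕ)) (b : Prop), (∀ w ∈ S, w ∈ Bn Y n ∧ ((w.head? = some dia) ↔ b)) →
      Set.InjOn (contract dia) S := by
    intro S b hS w1 hw1 w2 hw2 hfil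
    obtain ⟨⟨hw1l, hw1len⟩, hflag1⟩ := hS w1 hw1
    obtain ⟨⟨hw2l, hw2len⟩, hflag2⟩ := hS w2 hw2
    exact reconstruct had w1 w2 (langY_facts ha hdia hw1l).1 (langY_facts ha hdia hw2l).1
      (by rw [hw1len, hw2len]) hfil (hflag1.trans hflag2.symm)
  have hsplit : Bn Y n = S1 ∪ S2 := by
    ext w
    rw [hS1, hS2]
    constructor
    · intro hw
      by_cases hhd : w.head? = some dia
      · exact Or.inl ⟨hw, hhd⟩
      · exact Or.inr ⟨hw, hhd⟩
    · rintro (⟨hw, -⟩ | ⟨hw, -⟩) <;> exact hw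
  have h1 : S1.ncard ≤ U.ncard := by
    apply Set.ncard_le_ncard_of_injOn (contract dia) (fun w hw => hmaps w hw.1)
      (hinj S1 True (fun w hw => ⟨hw.1, by simp [hw.2]⟩)) hUfin
  have h2 : S2.ncard ≤ U.ncard := by
    apply Set.ncard_le_ncard_of_injOn (contract dia) (fun w hw => hmaps w hw.1)
      (hinj S2 False (fun w hw => ⟨hw.1, by simp [hw.2]⟩)) hUfin
  calc (Bn Y n).ncard = (S1 ∪ S2).ncard := by rw [hsplit]
    _ ≤ S1.ncard + S2.ncard := Set.ncard_union_le _ _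
    _ ≤ 2 * U.ncard := by omega
    _ ≤ 2 * ∑ m ∈ Finset.range (n + 1), (Bn X m).ncard := by
        have hb := ncard_biUnion_le (n + 1) (Bn X)
        rw [← hU] at hb
        omega

lemma bn_exp_bwd {X : Set Point} {a dia : ℕ} (hXs : IsShiftSpace X)
    (hYs : IsShiftSpace (ReplaceWord [a] [a, dia] X))
    (ha : a ∈ alphabet X) (hdia : dia ∉ alphabet X) (n : ℕ) :
    (Bn X n).ncard ≤
      ∑ m ∈ Finset.range (2 * n + 1), (Bn (ReplaceWord [a] [a, dia] X) m).ncard := by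
  classical
  have had : a ≠ dia := fun h => hdia (h ▸ ha)
  set Y := ReplaceWord [a] [a, dia] X with hY
  set U : Set (List ℕ) := ⋃ m ∈ Finset.range (2 * n + 1), Bn Y m with hU
  have hUfin : U.Finite :=
    Set.Finite.biUnion (Finset.range (2 * n + 1)).finite_toSet (fun m _ => Bn_finite hYs m)
  have hmaps : ∀ w ∈ Bn X n, expandW a dia w ∈ U := by
    rintro w ⟨hw, hlen⟩
    obtain ⟨x, hx, i, L, rfl⟩ := mem_language_iff.1 hw
    rw [word_length] at hlen
    subst hlen
    have hyY : expY a dia x ∈ Y := ⟨x, hx, replacedBy_expY a dia x⟩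
    have hword := expY_word a dia x i L
    have hmem : expandW a dia (word x i L) ∈ language Y := by
      rw [← hword]
      exact word_mem_language hyY _ _
    rw [hU]
    simp only [Set.mem_iUnion]
    refine ⟨(expandW a dia (word x i L)).length, ?_, hmem, rfl⟩
    simp only [Finset.mem_range]
    have := (expandW_length a dia (word x i L)).2
    rw [word_length] at this
    omega
  have hinj : Set.InjOn (expandW a dia) (Bn X n) := by
    intro w1 hw1 w2 hw2 heq
    have h1 : ∀ b ∈ w1, b ≠ dia := fun b hb h =>
      hdia (h ▸ lang_letters_alphabet hw1.1 b hb)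
    have h2 : ∀ b ∈ w2, b ≠ dia := fun b hb h =>
      hdia (h ▸ lang_letters_alphabet hw2.1 b hb)
    rw [← contract_expandW had w1 h1, ← contract_expandW had w2 h2, heq]
  calc (Bn X n).ncard ≤ U.ncard := Set.ncard_le_ncard_of_injOn _ hmaps hinj hUfin
    _ ≤ ∑ m ∈ Finset.range (2 * n + 1), (Bn Y m).ncard := ncard_biUnion_le _ _

/-! ### Subexponential growth transfers through polynomial sums -/

lemma nat_le_rpow {δ : ℝ} (hδ : 0 < δ) :
    ∃ D : ℝ, 1 ≤ D ∧ ∀ n : ℕ, ((n : ℝ) + 1) ≤ D * (2 : ℝ) ^ (δ * n) := by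
  set c : ℝ := δ * Real.log 2 with hc
  have hcpos : 0 < c := mul_pos hδ (Real.log_pos one_lt_two)
  refine ⟨max 1 (1 / c), le_max_left _ _, fun n => ?_⟩
  have h1 : c * n + 1 ≤ Real.exp (c * n) := Real.add_one_le_exp _
  have h2 : (2 : ℝ) ^ (δ * (n : ℝ)) = Real.exp (c * n) := by
    rw [Real.rpow_def_of_pos (by norm_num : (0:ℝ) < 2)]
    congr 1
    rw [hc]
    ring
  rw [h2]
  have hD1 : (1:ℝ) ≤ max 1 (1 / c) := le_max_left _ _
  have hD2 : 1 / c ≤ max 1 (1 / c) := le_max_right _ _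
  have hn0 : (0:ℝ) ≤ (n:ℝ) := Nat.cast_nonneg n
  have key : (n : ℝ) + 1 ≤ max 1 (1 / c) * (c * n + 1) := by
    have : (1 / c) * c = 1 := by field_simp
    nlinarith [mul_le_mul_of_nonneg_right hD2 (mul_nonneg (le_of_lt hcpos) hn0)]
  calc ((n:ℝ) + 1) ≤ max 1 (1 / c) * (c * n + 1) := key
    _ ≤ max 1 (1 / c) * Real.exp (c * n) := by
        apply mul_le_mul_of_nonneg_left h1 (by linarith)

lemma subexp_of_sum_le {X Y : Set Point} (c K : ℕ) (hc : 1 ≤ c) (hK : 1 ≤ K)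
    (hle : ∀ n : ℕ, (Bn Y n).ncard ≤ K * ∑ m ∈ Finset.range (c * n + 1), (Bn X m).ncard) :
    Subexp X → Subexp Y := by
  intro hX ε hε
  have hc0 : (0:ℝ) < c := by exact_mod_cast hc
  obtain ⟨C, hC1, hC⟩ := hX (ε / (2 * c)) (by positivity)
  obtain ⟨D, hD1, hD⟩ := nat_le_rpow (show (0:ℝ) < ε / 2 by linarith)
  have hKR : (1:ℝ) ≤ (K:ℝ) := by exact_mod_cast hK
  have hcR : (1:ℝ) ≤ (c:ℝ) := by exact_mod_cast hc
  refine ⟨K * c * D * C, ?_, fun n => ?_⟩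
  · have p1 : (0:ℝ) ≤ (K:ℝ) * c := by positivity
    have q1 : (1:ℝ) ≤ (K:ℝ) * c := by nlinarith
    have p2 : (0:ℝ) ≤ (K:ℝ) * c * D := by nlinarith
    have q2 : (1:ℝ) ≤ (K:ℝ) * c * D := by nlinarith
    calc (1:ℝ) ≤ (K:ℝ) * c * D := q2
      _ ≤ (K:ℝ) * c * D * C := le_mul_of_one_le_right p2 hC1
  have hsum : (∑ m ∈ Finset.range (c * n + 1), ((Bn X m).ncard : ℝ)) ≤
      (c * n + 1 : ℝ) * (C * (2:ℝ) ^ ((ε / 2) * n)) := by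
    have hterm : ∀ m ∈ Finset.range (c * n + 1),
        ((Bn X m).ncard : ℝ) ≤ C * (2:ℝ) ^ ((ε / 2) * n) := by
      intro m hm
      rw [Finset.mem_range] at hm
      calc ((Bn X m).ncard : ℝ) ≤ C * (2:ℝ) ^ ((ε / (2 * c)) * m) := hC m
        _ ≤ C * (2:ℝ) ^ ((ε / 2) * n) := by
            apply mul_le_mul_of_nonneg_left _ (by linarith)
            apply Real.rpow_le_rpow_of_exponent_le one_le_two
            have hmn : (m : ℝ) ≤ (c : ℝ) * n := by
              have : (m : ℝ) ≤ (c * n : ℕ) := by exact_mod_cast Nat.lt_succ_iff.1 hm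
              push_cast at this
              linarith
            calc ε / (2 * c) * m ≤ ε / (2 * c) * (c * n) := by
                  apply mul_le_mul_of_nonneg_left hmn (by positivity)
              _ = ε / 2 * n := by field_simp
    calc (∑ m ∈ Finset.range (c * n + 1), ((Bn X m).ncard : ℝ))
        ≤ ∑ _m ∈ Finset.range (c * n + 1), (C * (2:ℝ) ^ ((ε / 2) * n)) :=
          Finset.sum_le_sum hterm
      _ = (c * n + 1 : ℝ) * (C * (2:ℝ) ^ ((ε / 2) * n)) := by
          rw [Finset.sum_const, Finset.card_range]
          push_cast
          ring
  have hcn : ((c:ℝ) * n + 1) ≤ (c:ℝ) * ((n:ℝ) + 1) := by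
    have : (1:ℝ) ≤ (c:ℝ) := by exact_mod_cast hc
    nlinarith [Nat.cast_nonneg (α := ℝ) n]
  have hnD : ((n:ℝ) + 1) ≤ D * (2:ℝ) ^ ((ε/2) * n) := hD n
  have hcast : ((Bn Y n).ncard : ℝ) ≤
      (K:ℝ) * ∑ m ∈ Finset.range (c * n + 1), ((Bn X m).ncard : ℝ) := by
    have := hle n
    have h' : ((Bn Y n).ncard : ℝ) ≤ ((K * ∑ m ∈ Finset.range (c * n + 1), (Bn X m).ncard : ℕ) : ℝ) := by
      exact_mod_cast this
    rw [Nat.cast_mul, Nat.cast_sum] at h'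
    exact h'
  have hK0 : (0:ℝ) ≤ (K:ℝ) := Nat.cast_nonneg K
  have hrpow_pos : (0:ℝ) < (2:ℝ) ^ ((ε/2) * n) := Real.rpow_pos_of_pos (by norm_num) _
  calc ((Bn Y n).ncard : ℝ)
      ≤ (K:ℝ) * ∑ m ∈ Finset.range (c * n + 1), ((Bn X m).ncard : ℝ) := hcast
    _ ≤ (K:ℝ) * (((c:ℝ) * n + 1) * (C * (2:ℝ) ^ ((ε / 2) * n))) := by
        apply mul_le_mul_of_nonneg_left hsum hK0
    _ ≤ (K:ℝ) * (((c:ℝ) * ((n:ℝ)+1)) * (C * (2:ℝ) ^ ((ε / 2) * n))) := by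
        apply mul_le_mul_of_nonneg_left _ hK0
        apply mul_le_mul_of_nonneg_right hcn (by positivity)
    _ ≤ (K:ℝ) * (((c:ℝ) * (D * (2:ℝ) ^ ((ε/2) * n))) * (C * (2:ℝ) ^ ((ε / 2) * n))) := by
        apply mul_le_mul_of_nonneg_left _ hK0
        apply mul_le_mul_of_nonneg_right _ (by positivity)
        apply mul_le_mul_of_nonneg_left hnD (Nat.cast_nonneg c)
    _ = (K:ℝ) * c * D * C * ((2:ℝ) ^ ((ε/2) * n) * (2:ℝ) ^ ((ε/2) * n)) := by ring
    _ = (K:ℝ) * c * D * C * (2:ℝ) ^ (ε * n) := by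
        rw [← Real.rpow_add (by norm_num : (0:ℝ) < 2)]
        congr 1
        ring


/-! ### Final assembly -/

theorem subexp_iff_of_conjugate {X Y : Set Point} (hXs : IsShiftSpace X)
    (hYs : IsShiftSpace Y) (h : Conjugate X Y) : (Subexp X ↔ Subexp Y) := by
  obtain ⟨φ, hsbc, hbij⟩ := h
  constructor
  · intro hX
    obtain ⟨c, hc⟩ := bn_le_of_sbc hXs hsbc hbij.surjOn
    exact subexp_of_le_shift c hc hX
  · intro hY'
    obtain ⟨A, hA, F, rfl⟩ := hXs
    obtain ⟨c, hc⟩ := bn_le_of_conj_inv hA F hYs hsbc hbij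
    exact subexp_of_le_shift c hc hY'

theorem subexp_iff_of_expansion {X Y : Set Point} (hXs : IsShiftSpace X)
    (hYs : IsShiftSpace Y) (h : IsSymbolExpansionOf Y X) : (Subexp X ↔ Subexp Y) := by
  obtain ⟨a, dia, ha, hdia, rfl⟩ := h
  constructor
  · intro hX
    apply subexp_of_sum_le 1 2 le_rfl (by norm_num) (fun n => ?_) hX
    have := bn_exp_fwd hXs ha hdia n
    simpa using this
  · intro hY'
    apply subexp_of_sum_le 2 1 (by norm_num) le_rfl (fun n => ?_) hY'
    have := bn_exp_bwd hXs hYs ha hdia n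
    simpa using this

theorem entropy_zero_iff_of_festep {X Y : Set Point} (h : FEStep X Y) :
    (entropy X = 0 ↔ entropy Y = 0) := by
  obtain ⟨hXs, hYs, hcase⟩ := h
  rw [entropy_eq_zero_iff_subexp hXs, entropy_eq_zero_iff_subexp hYs]
  rcases hcase with h | h | h | h
  · exact subexp_iff_of_conjugate hXs hYs h
  · exact (subexp_iff_of_conjugate hYs hXs h).symm
  · exact subexp_iff_of_expansion hXs hYs h
  · exact (subexp_iff_of_expansion hYs hXs h).symm

/-- For flow equivalent shift spaces `X` and `Y`,
`h(X) = 0` iff `h(Y) = 0`. -/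
theorem stmt4 (X Y : Set Point) (hX : IsShiftSpace X) (hY : IsShiftSpace Y)
    (h : FlowEquiv X Y) :
    entropy X = 0 ↔ entropy Y = 0 := by
  induction h with
  | refl => rfl
  | tail _hab hbc ih => exact (ih hbc.1).trans (entropy_zero_iff_of_festep hbc)

end SymbDyn
end

section
/- Let X be a shift space and let w ∈ B(X) be a word that is intrinsically synchronising for X and such that X does not admit non-trivial w-overlaps; let ◊ be a symbol not in the alphabet of X. Then the one-letter word ◊ is intrinsically synchronising for the shift space X^{w↦◊}. -/
open Filter

namespace SymbDyn

/-! ### Auxiliary lemmas for Statement 8 -/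

lemma matchesAt_def {w : List ℕ} {x : Point} {i : ℤ} :
    MatchesAt w x i ↔ ∀ j : ℕ, (hj : j < w.length) → x (i + (j:ℤ)) = w[j] := by
  constructor
  · intro h j hj; exact h ⟨j, hj⟩
  · intro h j; exact h j j.isLt

/-- The window of `x` of length `n` starting at position `r`. -/
def window (x : Point) (r : ℤ) (n : ℕ) : List ℕ :=
  List.ofFn (fun j : Fin n => x (r + ((j:ℕ):ℤ)))

@[simp] lemma window_length {x : Point} {r : ℤ} {n : ℕ} : (window x r n).length = n :=
  List.length_ofFn

lemma window_getElem' {x : Point} {r : ℤ} {n j : ℕ} (h : j < (window x r n).length) :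
    (window x r n)[j] = x (r + (j:ℤ)) := by
  simp [window]

lemma matchesAt_window {x : Point} {r : ℤ} {n : ℕ} : MatchesAt (window x r n) x r := by
  rw [matchesAt_def]
  intro j hj
  rw [window_getElem' (by simpa using hj)]

lemma MatchesAt.append {u v : List ℕ} {x : Point} {i : ℤ}
    (h1 : MatchesAt u x i) (h2 : MatchesAt v x (i + (u.length:ℤ))) :
    MatchesAt (u ++ v) x i := by
  rw [matchesAt_def] at *
  intro j hj
  rcases lt_or_ge j u.length with h | h
  · rw [List.getElem_append_left h]; exact h1 j h
  · rw [List.getElem_append_right h]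
    have := h2 (j - u.length) (by simp at hj; omega)
    rw [← this]
    congr 1
    omega

lemma MatchesAt.append_left {u v : List ℕ} {x : Point} {i : ℤ}
    (h : MatchesAt (u ++ v) x i) : MatchesAt u x i := by
  rw [matchesAt_def] at *
  intro j hj
  have := h j (by simp; omega)
  rwa [List.getElem_append_left hj] at this

lemma MatchesAt.append_right {u v : List ℕ} {x : Point} {i : ℤ}
    (h : MatchesAt (u ++ v) x i) : MatchesAt v x (i + (u.length:ℤ)) := by
  rw [matchesAt_def] at *
  intro j hj
  have := h (u.length + j) (by simp; omega)
  rw [List.getElem_append_right (by omega)] at this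
  simpa [add_assoc] using this

lemma int_affine {f : ℤ → ℤ} (h : ∀ k, f (k+1) = f k + 1) : ∀ a b : ℤ, f b = f a + (b - a) := by
  have h0 : ∀ b : ℤ, f b = f 0 + b := by
    intro b
    induction b using Int.induction_on with
    | zero => simp
    | succ k ih => rw [h k, ih]; ring
    | pred k ih =>
      have := h (-(k:ℤ) - 1)
      simp only [sub_add_cancel] at this
      rw [this] at ih
      omega
  intro a b; rw [h0 a, h0 b]; ring

lemma int_step_mono {f : ℤ → ℤ} (h : ∀ k, f k + 1 ≤ f (k+1)) :
    ∀ a b : ℤ, a ≤ b → f a + (b - a) ≤ f b := by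
  intro a b hab
  have key : ∀ n : ℕ, f a + n ≤ f (a + n) := by
    intro n
    induction n with
    | zero => simp
    | succ m ih =>
        have hh := h (a + m)
        push_cast
        push_cast at ih
        rw [show a + ((m:ℤ) + 1) = a + m + 1 by ring]
        omega
  have hn := key (b - a).toNat
  have : ((b - a).toNat : ℤ) = b - a := Int.toNat_of_nonneg (by omega)
  rw [this] at hn
  simpa using hn

lemma mem_of_windows {X : Set Point} (hX : IsShiftSpace X) (x : Point)
    (h : ∀ (r : ℤ) (n : ℕ), window x r n ∈ language X) : x ∈ X := by
  obtain ⟨A, hA, F, rfl⟩ := hX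
  refine ⟨?_, ?_⟩
  · intro i
    obtain ⟨x', hx', m, hm⟩ := h i 1
    have h0 := matchesAt_def.mp hm 0 (by simp)
    rw [window_getElem' (by simp)] at h0
    simp only [Nat.cast_zero, add_zero] at h0
    rw [← h0]
    exact hx'.1 m
  · intro f hf hocc
    obtain ⟨m, hm⟩ := hocc
    have hfw : f = window x m f.length := by
      apply List.ext_getElem (by simp)
      intro j hj1 hj2
      rw [window_getElem' (by simpa using hj1)]
      exact (matchesAt_def.mp hm j hj1).symm
    have hfl : f ∈ language (XF A F) := by
      rw [hfw]; exact h m f.length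
    obtain ⟨x'', hx'', hocc''⟩ := hfl
    exact hx''.2 f hf hocc''

theorem stmt8 (X : Set Point) (hX : IsShiftSpace X)
    (w : List ℕ) (hw : w ∈ language X)
    (hsyn : IntrinsicallySynchronising X w)
    (hov : ¬ AdmitsNontrivialOverlaps X w)
    (dia : ℕ) (hdia : dia ∉ alphabet X) :
    IntrinsicallySynchronising (ReplaceWord w [dia] X) [dia] := by
  intro v u hv hu
  obtain ⟨y1, ⟨x1, hx1, hwne, s1, t1, H1a, H1b, H1c⟩, i1, hm1⟩ := hv
  obtain ⟨y2, ⟨x2, hx2, -, s2, t2, H2a, H2b, H2c⟩, i2, hm2⟩ := hu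
  have hW : 1 ≤ (w.length:ℤ) := by
    have := List.length_pos_iff.mpr hwne
    omega
  have hnd : ∀ z ∈ X, ∀ n : ℤ, z n ≠ dia := fun z hz n e => hdia ⟨z, hz, n, e⟩
  -- step facts
  have ht1s : ∀ k, t1 (k+1) = t1 k + 1 := by
    intro k
    by_cases hk : MatchesAt w x1 (s1 k)
    · have := ((H1c k).1 hk).2.1; simpa using this
    · exact ((H1c k).2 hk).2.1
  have ht2s : ∀ k, t2 (k+1) = t2 k + 1 := by
    intro k
    by_cases hk : MatchesAt w x2 (s2 k)
    · have := ((H2c k).1 hk).2.1; simpa using this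
    · exact ((H2c k).2 hk).2.1
  have ht1 := int_affine ht1s
  have ht2 := int_affine ht2s
  have hs1s : ∀ k, s1 k + 1 ≤ s1 (k+1) := by
    intro k
    by_cases hk : MatchesAt w x1 (s1 k)
    · have := ((H1c k).1 hk).1; omega
    · have := ((H1c k).2 hk).1; omega
  have hs2s : ∀ k, s2 k + 1 ≤ s2 (k+1) := by
    intro k
    by_cases hk : MatchesAt w x2 (s2 k)
    · have := ((H2c k).1 hk).1; omega
    · have := ((H2c k).2 hk).1; omega
  have hs1m := int_step_mono hs1s
  have hs2m := int_step_mono hs2s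
  -- dia positions in y1, y2
  have hy1d : y1 (i1 + (v.length:ℤ)) = dia := by
    have h := hm1 ⟨v.length, by simp⟩
    simpa using h
  have hy2d : y2 i2 = dia := by
    have h := hm2 ⟨0, by simp⟩
    simpa using h
  obtain ⟨k1, hk1a, hk1b⟩ := H1b (i1 + (v.length:ℤ))
  have hk1 : t1 k1 = i1 + (v.length:ℤ) := by have := ht1s k1; omega
  obtain ⟨k2, hk2a, hk2b⟩ := H2b i2
  have hk2 : t2 k2 = i2 := by have := ht2s k2; omega
  have hM1 : MatchesAt w x1 (s1 k1) := by
    by_contra h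
    have h3 := ((H1c k1).2 h).2.2
    rw [hk1, hy1d] at h3
    exact hnd x1 hx1 _ h3.symm
  have hM2 : MatchesAt w x2 (s2 k2) := by
    by_contra h
    have h3 := ((H2c k2).2 h).2.2
    rw [hk2, hy2d] at h3
    exact hnd x2 hx2 _ h3.symm
  set q := s1 k1 with hqdef
  set Δ := q - s2 k2 with hΔdef
  set P := t1 k1 with hPdef
  set x : Point := fun n => if n < q then x1 n else x2 (n - Δ) with hxdef
  have hxl : ∀ n, n < q → x n = x1 n := by intro n hn; simp only [hxdef, if_pos hn]
  have hxr : ∀ n, q ≤ n → x n = x2 (n - Δ) := by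
    intro n hn; simp only [hxdef, if_neg (not_lt.mpr hn)]
  have hMxq : MatchesAt w x q := by
    rw [matchesAt_def]; intro j hj
    rw [hxr _ (by omega)]
    have h2 := (matchesAt_def.mp hM2) j hj
    rw [← h2]; congr 1; omega
  -- x is a point of X
  have hxX : x ∈ X := by
    apply mem_of_windows hX
    intro r n
    rcases le_or_gt (r + (n:ℤ)) q with hle | hgt
    · refine ⟨x1, hx1, r, ?_⟩
      rw [matchesAt_def]; intro j hj
      rw [window_getElem' (by simpa using hj), hxl _ (by simp at hj; omega)]
    · rcases le_or_gt q r with hqr | hrq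
      · refine ⟨x2, hx2, r - Δ, ?_⟩
        rw [matchesAt_def]; intro j hj
        rw [window_getElem' (by simpa using hj), hxr _ (by omega)]
        congr 1; omega
      · -- straddle
        set d := (q - r).toNat with hddef
        have hd : (d:ℤ) = q - r := Int.toNat_of_nonneg (by omega)
        have haw : (window x1 r d) ++ w ∈ language X := by
          refine ⟨x1, hx1, r, MatchesAt.append matchesAt_window ?_⟩
          rw [window_length, show r + (d:ℤ) = q from by omega]
          exact hM1
        have hwc : w ++ (window x2 (s2 k2 + (w.length:ℤ)) n) ∈ language X :=
          ⟨x2, hx2, s2 k2, MatchesAt.append hM2 matchesAt_window⟩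
        obtain ⟨x3, hx3, i3, hm3⟩ := hsyn _ _ haw hwc
        refine ⟨x3, hx3, i3, ?_⟩
        rw [matchesAt_def]; intro j hj
        rw [window_getElem' (by simpa using hj)]
        simp only [window_length] at hj
        have hj3 : j < ((window x1 r d ++ w) ++ window x2 (s2 k2 + (w.length:ℤ)) n).length := by
          simp; omega
        have h3 := (matchesAt_def.mp hm3) j hj3
        rw [h3]
        rcases lt_or_ge j d with hjd | hjd
        · rw [List.getElem_append_left (by simp; omega),
             List.getElem_append_left (by simp; omega),
             window_getElem' (by simp; omega), hxl _ (by omega)]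
        · rcases lt_or_ge j (d + w.length) with hjw | hjw
          · rw [List.getElem_append_left (by simp; omega)]
            rw [List.getElem_append_right (by simp; omega)]
            have h4 := (matchesAt_def.mp hMxq) (j - d) (by omega)
            have h5 : x (r + (j:ℤ)) = x (q + ((j - d : ℕ):ℤ)) := by congr 1; omega
            rw [h5]
            simp only [window_length]
            exact h4.symm
          · rw [List.getElem_append_right (by simp; omega),
               window_getElem' (by simp; omega), hxr _ (by omega)]
            simp only [window_length, List.length_append]
            congr 1
            omega
  -- no occurrence of w straddles q in x
  have hnostrad : ∀ m : ℤ, m < q → q < m + (w.length:ℤ) → ¬ MatchesAt w x m := by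
    intro m hm1' hm2' hmm
    apply hov
    have hd : (((q - m).toNat):ℤ) = q - m := Int.toNat_of_nonneg (by omega)
    set d := (q - m).toNat with hddef
    refine ⟨window x m (w.length + d), ⟨x, hxX, m, matchesAt_window⟩, by simp; omega,
      by simp; omega, ?_, ?_⟩
    · refine ⟨window x (m + (w.length:ℤ)) d, ?_⟩
      apply List.ext_getElem (by simp)
      intro j hj1 hj2
      simp only [window_length] at hj2
      rw [window_getElem' (by simpa using hj2)]
      rcases lt_or_ge j w.length with hjw | hjw
      · rw [List.getElem_append_left hjw]
        exact ((matchesAt_def.mp hmm) j hjw).symm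
      · rw [List.getElem_append_right hjw, window_getElem' (by simp; omega)]
        congr 1
        omega
    · refine ⟨window x m d, ?_⟩
      apply List.ext_getElem (by simp; omega)
      intro j hj1 hj2
      simp only [window_length] at hj2
      rw [window_getElem' (by simpa using hj2)]
      rcases lt_or_ge j d with hjd | hjd
      · rw [List.getElem_append_left (by simp; omega), window_getElem' (by simp; omega)]
      · rw [List.getElem_append_right (by simp; omega)]
        have h4 := (matchesAt_def.mp hMxq) (j - (window x m d).length) (by simp; omega)
        rw [← h4]
        congr 1
        simp only [window_length]
        omega
  -- the block-start sequence for x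
  set S : ℤ → ℤ := fun k => if k ≤ k1 then s1 k else s2 (k - k1 + k2) + Δ with hSdef
  have hSl : ∀ k, k ≤ k1 → S k = s1 k := by intro k hk; simp only [hSdef, if_pos hk]
  have hSr : ∀ k, k1 ≤ k → S k = s2 (k - k1 + k2) + Δ := by
    intro k hk
    rcases eq_or_lt_of_le hk with heq | h
    · rw [← heq, hSl _ le_rfl, show k1 - k1 + k2 = k2 from by ring]
      omega
    · simp only [hSdef, if_neg (by omega : ¬ k ≤ k1)]
  -- transfer of matches on the left part
  have hMleft : ∀ k, k < k1 → (MatchesAt w x (s1 k) ↔ MatchesAt w x1 (s1 k)) := by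
    intro k hk
    have hlt : s1 k < q := by have := hs1m k k1 (le_of_lt hk); omega
    constructor
    · intro h
      rcases le_or_gt (s1 k + (w.length:ℤ)) q with hle | hgt
      · rw [matchesAt_def] at h ⊢
        intro j hj
        rw [← h j hj, hxl _ (by omega)]
      · exact absurd h (hnostrad _ hlt hgt)
    · intro h
      have hstep := ((H1c k).1 h).1
      have hle : s1 k + (w.length:ℤ) ≤ q := by
        have := hs1m (k+1) k1 (by omega); omega
      rw [matchesAt_def] at h ⊢
      intro j hj
      rw [← h j hj, hxl _ (by omega)]
  have hMright : ∀ k', k2 ≤ k' → (MatchesAt w x (s2 k' + Δ) ↔ MatchesAt w x2 (s2 k')) := by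
    intro k' hk'
    have hq2 : q ≤ s2 k' + Δ := by have := hs2m k2 k' hk'; omega
    have hpt : ∀ j : ℕ, x (s2 k' + Δ + (j:ℤ)) = x2 (s2 k' + (j:ℤ)) := by
      intro j
      rw [hxr _ (by omega)]
      congr 1; omega
    rw [matchesAt_def, matchesAt_def]
    constructor
    · intro h j hj; rw [← h j hj, hpt j]
    · intro h j hj; rw [← h j hj, hpt j]
  -- the glued point of the replaced shift
  set y : Point := fun n => if n ≤ P then y1 n else y2 (n - P + i2) with hydef
  have hyl : ∀ n, n ≤ P → y n = y1 n := by intro n hn; simp only [hydef, if_pos hn]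
  have hyr : ∀ n, P < n → y n = y2 (n - P + i2) := by
    intro n hn; simp only [hydef, if_neg (not_le.mpr hn)]
  refine ⟨y, ⟨x, hxX, hwne, S, t1, ?_, H1b, ?_⟩, i1, ?_⟩
  · -- every occurrence of w in x is a block start
    intro m hm
    rcases le_or_gt q m with hqm | hmq
    · have h2 : MatchesAt w x2 (m - Δ) := by
        rw [matchesAt_def] at hm ⊢
        intro j hj
        rw [← hm j hj, hxr _ (by omega)]
        congr 1; omega
      obtain ⟨k'', hk''⟩ := H2a _ h2
      have hk2le : k2 ≤ k'' := by
        by_contra h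
        push_neg at h
        have := hs2m k'' k2 (le_of_lt h)
        omega
      refine ⟨k'' - k2 + k1, ?_⟩
      rw [hSr _ (by omega), show k'' - k2 + k1 - k1 + k2 = k'' from by ring, hk'']
      omega
    · rcases le_or_gt (m + (w.length:ℤ)) q with hle | hgt
      · have h1 : MatchesAt w x1 m := by
          rw [matchesAt_def] at hm ⊢
          intro j hj
          rw [← hm j hj, hxl _ (by omega)]
        obtain ⟨k', hk'⟩ := H1a _ h1
        have hlt : k' < k1 := by
          by_contra h
          push_neg at h
          have := hs1m k1 k' h
          omega
        exact ⟨k', by rw [hSl _ (le_of_lt hlt)]; exact hk'⟩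
      · exact absurd hm (hnostrad m hmq hgt)
  · -- the block conditions
    intro k
    rcases lt_or_ge k k1 with hk | hk
    · have hSk : S k = s1 k := hSl _ (le_of_lt hk)
      have hSk1 : S (k+1) = s1 (k+1) := hSl _ (by omega)
      have htP : t1 k ≤ P := by have := ht1 k1 k; omega
      constructor
      · intro hmk
        rw [hSk] at hmk
        obtain ⟨e1, e2, e3⟩ := (H1c k).1 ((hMleft k hk).mp hmk)
        refine ⟨by rw [hSk, hSk1, e1], e2, ?_⟩
        intro j
        have hj : ((j:ℕ):ℤ) = 0 := by
          have hlt1 := j.isLt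
          simp only [List.length_singleton] at hlt1
          omega
        rw [← e3 j, hj, add_zero, hyl _ htP]
      · intro hmk
        rw [hSk] at hmk
        obtain ⟨e1, e2, e3⟩ := (H1c k).2 (fun hh => hmk ((hMleft k hk).mpr hh))
        refine ⟨by rw [hSk, hSk1, e1], e2, ?_⟩
        rw [hSk, hyl _ htP, e3, hxl _ (by have := hs1m k k1 (le_of_lt hk); omega)]
    · have hk2le : k2 ≤ k - k1 + k2 := by omega
      have hSk : S k = s2 (k - k1 + k2) + Δ := hSr _ hk
      have hSk1 : S (k+1) = s2 (k - k1 + k2 + 1) + Δ := by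
        rw [hSr _ (by omega)]
        congr 2
        ring
      have htk : t1 k = P + (k - k1) := by have := ht1 k1 k; omega
      have ht2k : t2 (k - k1 + k2) = i2 + (k - k1) := by
        have := ht2 k2 (k - k1 + k2); omega
      constructor
      · intro hmk
        rw [hSk] at hmk
        obtain ⟨e1, e2, e3⟩ := (H2c (k - k1 + k2)).1 ((hMright _ hk2le).mp hmk)
        refine ⟨by rw [hSk, hSk1, e1]; ring, by simpa using ht1s k, ?_⟩
        intro j
        have hj : ((j:ℕ):ℤ) = 0 := by
          have hlt1 := j.isLt
          simp only [List.length_singleton] at hlt1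
          omega
        rcases eq_or_lt_of_le hk with heq | hlt
        · -- k = k1
          obtain ⟨f1, f2, f3⟩ := (H1c k1).1 hM1
          rw [hj, add_zero]
          have hy1P := f3 j
          rw [hj, add_zero] at hy1P
          rw [← heq, hyl _ le_rfl]
          exact hy1P
        · have hy2v := e3 j
          rw [hj, add_zero] at hy2v
          rw [hj, add_zero, hyr _ (by omega), ← hy2v]
          congr 1
          omega
      · intro hmk
        rw [hSk] at hmk
        have hne : k1 < k := by
          rcases eq_or_lt_of_le hk with heq | h
          · exfalso
            apply hmk
            rw [show k - k1 + k2 = k2 from by omega,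
              show s2 k2 + Δ = q from by omega]
            exact hMxq
          · exact h
        obtain ⟨e1, e2, e3⟩ := (H2c (k - k1 + k2)).2 (fun hh => hmk ((hMright _ hk2le).mpr hh))
        refine ⟨by rw [hSk, hSk1, e1]; ring, by simpa using ht1s k, ?_⟩
        rw [hyr _ (by omega), show t1 k - P + i2 = t2 (k - k1 + k2) from by omega, e3,
          hSk, hxr _ (by have := hs2m k2 _ hk2le; omega)]
        congr 1
        omega
  · -- v ++ [dia] ++ u occurs in y at i1
    refine MatchesAt.append ?_ ?_
    · rw [matchesAt_def] at hm1 ⊢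
      intro j hj
      simp only [List.length_append, List.length_singleton] at hj
      rw [← hm1 j (by simp; omega), hyl _ (by omega)]
    · have hm2' := hm2.append_right
      simp only [List.length_singleton, Nat.cast_one] at hm2'
      rw [matchesAt_def] at hm2' ⊢
      intro j hj
      rw [← hm2' j hj, hyr _ (by simp; omega)]
      congr 1
      simp only [List.length_append, List.length_singleton]
      push_cast
      omega
end SymbDyn
end

section
/- Let S ⊆ ℕ₀ be nonempty. Then the S-gap shift X(S) is of finite type if and only if S is finite or there exist R ⊆ ℕ₀ and t ∈ ℕ₀ with S = R ∪ (t + ℕ₀), where t + ℕ₀ = {t + k : k ∈ ℕ₀}. -/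
open Filter

namespace SymbDyn

lemma gapWord_length (k : ℕ) : (gapWord k).length = k + 2 := by
  simp [gapWord]

lemma gapWord_get (k j : ℕ) (h : j < (gapWord k).length) :
    (gapWord k)[j] = if j = 0 ∨ j = k + 1 then 1 else 0 := by
  match j with
  | 0 => simp [gapWord]
  | (m+1) =>
    rw [gapWord_length] at h
    simp only [gapWord, List.getElem_cons_succ]
    by_cases hm : m < k
    · rw [List.getElem_append_left (by simpa using hm)]
      simp only [List.getElem_replicate]
      rw [if_neg (by omega)]
    · have hmk : m = k := by omega
      subst hmk
      rw [List.getElem_append_right (by simp)]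
      simp

lemma matchesAt_gapWord (k : ℕ) (x : Point) (i : ℤ) :
    MatchesAt (gapWord k) x i ↔
      x i = 1 ∧ x (i + (k : ℤ) + 1) = 1 ∧
        ∀ j : ℕ, 1 ≤ j → j ≤ k → x (i + (j : ℤ)) = 0 := by
  constructor
  · intro h
    have h' : ∀ j : ℕ, j < k + 2 → x (i + (j : ℤ)) = if j = 0 ∨ j = k + 1 then 1 else 0 := by
      intro j hj
      have hj' : j < (gapWord k).length := by rw [gapWord_length]; omega
      have := h ⟨j, hj'⟩
      simpa [List.get_eq_getElem, gapWord_get k j hj'] using this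
    refine ⟨by simpa using h' 0 (by omega), ?_, ?_⟩
    · have := h' (k+1) (by omega)
      rw [if_pos (Or.inr rfl)] at this
      rw [show i + (k:ℤ) + 1 = i + ((k+1 : ℕ) : ℤ) by push_cast; ring]
      exact this
    · intro j h1 h2
      have := h' j (by omega)
      rwa [if_neg (by omega)] at this
  · rintro ⟨h1, h2, h3⟩ j
    have hj : (j : ℕ) < k + 2 := by
      have ha := j.isLt; have hb := gapWord_length k; omega
    rw [List.get_eq_getElem, gapWord_get k j j.isLt]
    by_cases h0 : (j : ℕ) = 0 ∨ (j : ℕ) = k + 1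
    · rw [if_pos h0]
      rcases h0 with h0 | h0 <;> rw [h0]
      · simpa using h1
      · rw [show i + ((k+1 : ℕ) : ℤ) = i + (k:ℤ) + 1 by push_cast; ring]
        exact h2
    · rw [if_neg h0]
      push_neg at h0
      exact h3 j (by omega) (by omega)

/-- For nonempty `S ⊆ ℕ₀`, the `S`-gap shift `X(S)` is of finite type
iff `S` is finite or `S = R ∪ (t + ℕ₀)` for some `R ⊆ ℕ₀` and `t ∈ ℕ₀`. -/
theorem stmt13 (S : Set ℕ) (hS : S.Nonempty) :
    IsSFT (sGapShift S) ↔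
      (S.Finite ∨ ∃ (R : Set ℕ) (t : ℕ), S = R ∪ { n : ℕ | ∃ k : ℕ, n = t + k }) := by
  constructor
  · rintro ⟨A, hA, F, hFfin, hXF⟩
    by_cases hSfin : S.Finite
    · exact Or.inl hSfin
    right
    obtain ⟨N, hN⟩ : ∃ N : ℕ, ∀ w ∈ F, w.length ≤ N := by
      obtain ⟨N, hN⟩ := (hFfin.image List.length).bddAbove
      exact ⟨N, fun w hw => hN ⟨w, hw, rfl⟩⟩
    obtain ⟨s, hsS, hsN⟩ := Set.Infinite.exists_gt hSfin N
    set z : Point := fun m => if ((s:ℤ)+1) ∣ m then 1 else 0 with hzdef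
    have hzX : z ∈ sGapShift S := by
      constructor
      · intro m
        by_cases h : ((s:ℤ)+1) ∣ m <;> simp [hzdef, h]
      · rintro w hw ⟨i, hm⟩
        rw [sGapForbidden, if_neg hSfin] at hw
        obtain ⟨k, hkS, rfl⟩ := hw
        rw [matchesAt_gapWord] at hm
        obtain ⟨h1, h2, h3⟩ := hm
        have hdi : ((s:ℤ)+1) ∣ i := by
          by_contra h; simp [hzdef, h] at h1
        have hdk : ((s:ℤ)+1) ∣ ((k:ℤ)+1) := by
          have hd2 : ((s:ℤ)+1) ∣ (i + ((k:ℤ)+1)) := by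
            by_contra h
            rw [show i + ((k:ℤ)+1) = i + (k:ℤ) + 1 by ring] at h
            simp [hzdef, h] at h2
          exact (dvd_add_right hdi).mp hd2
        have hdk' : (s+1) ∣ (k+1) := by exact_mod_cast hdk
        have hks : s + 1 ≤ k + 1 := Nat.le_of_dvd (by omega) hdk'
        have hne : k ≠ s := fun h => hkS (h ▸ hsS)
        have h2s : s + 1 ≤ k := by
          obtain ⟨m, hm⟩ := hdk'
          have hm1 : m ≠ 1 := by rintro rfl; omega
          have hm0 : m ≠ 0 := by rintro rfl; omega
          have : (s+1)*2 ≤ (s+1)*m := Nat.mul_le_mul_left _ (by omega)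
          omega
        have hz0 := h3 (s+1) (by omega) (by omega)
        have hdvd : ((s:ℤ)+1) ∣ (i + ((s+1:ℕ):ℤ)) := by
          push_cast
          exact dvd_add hdi ⟨1, by ring⟩
        simp [hzdef, hdvd] at hz0
        exact hz0 hdi
    have hzX' : z ∈ XF A F := hXF ▸ hzX
    have h1A : (1:ℕ) ∈ A := by
      have := hzX'.1 0
      simpa [hzdef] using this
    have h0A : (0:ℕ) ∈ A := by
      have := hzX'.1 1
      have hnd : ¬ ((s:ℤ)+1) ∣ (1:ℤ) := by
        intro h
        have := Int.le_of_dvd one_pos h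
        omega
      simpa [hzdef, hnd] using this
    have hcof : ∀ k : ℕ, N ≤ k → k ∈ S := by
      intro k hk
      by_contra hkS
      set x : Point := fun m => if m = 0 ∨ m = (k:ℤ)+1 then 1 else 0 with hxdef
      have hxX : x ∈ XF A F := by
        constructor
        · intro m
          by_cases h : (m = 0 ∨ m = (k:ℤ)+1) <;> simp [hxdef, h, h1A, h0A]
        · rintro w hw ⟨i, hm⟩
          apply hzX'.2 w hw
          have hL : w.length ≤ N := hN w hw
          set L := w.length with hLdef
          have key : ∀ d : ℤ, (∀ j : ℕ, j < L → z (d + (j:ℤ)) = x (i + (j:ℤ))) →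
              occursIn w z := by
            intro d hd
            exact ⟨d, fun j => (hd j j.isLt).trans (hm j)⟩
          by_cases hc0 : i ≤ 0 ∧ 0 < i + (L:ℤ)
          · apply key i
            intro j hj
            have hne : i + (j:ℤ) ≠ (k:ℤ)+1 := by omega
            by_cases h0 : i + (j:ℤ) = 0
            · simp [hzdef, hxdef, h0]
            · have hnd : ¬ ((s:ℤ)+1) ∣ (i + (j:ℤ)) := fun h =>
                h0 (Int.eq_zero_of_abs_lt_dvd h (by rw [abs_lt]; omega))
              simp [hzdef, hxdef, hnd, h0, hne]
          · by_cases hc1 : i ≤ (k:ℤ)+1 ∧ (k:ℤ)+1 < i + (L:ℤ)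
            · apply key (i - ((k:ℤ)+1))
              intro j hj
              have hne : i + (j:ℤ) ≠ 0 := by omega
              by_cases h0 : i + (j:ℤ) = (k:ℤ)+1
              · have he : i - ((k:ℤ)+1) + (j:ℤ) = 0 := by omega
                simp [hzdef, hxdef, he, h0]
              · have hnd : ¬ ((s:ℤ)+1) ∣ (i - ((k:ℤ)+1) + (j:ℤ)) := by
                  intro h
                  have := Int.eq_zero_of_abs_lt_dvd h (by rw [abs_lt]; omega)
                  omega
                simp [hzdef, hxdef, hnd, h0, hne]
            · apply key 1
              intro j hj
              have hne : i + (j:ℤ) ≠ 0 := by omega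
              have hne' : i + (j:ℤ) ≠ (k:ℤ)+1 := by omega
              have hnd : ¬ ((s:ℤ)+1) ∣ ((1:ℤ) + (j:ℤ)) := by
                intro h
                have := Int.eq_zero_of_abs_lt_dvd h (by rw [abs_lt]; omega)
                omega
              simp [hzdef, hxdef, hnd, hne, hne']
      have hxS : x ∈ sGapShift S := hXF ▸ hxX
      apply hxS.2 (gapWord k)
      · rw [sGapForbidden, if_neg hSfin]
        exact ⟨k, hkS, rfl⟩
      · refine ⟨0, ?_⟩
        rw [matchesAt_gapWord]
        refine ⟨by simp [hxdef], by simp [hxdef], ?_⟩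
        intro j h1 h2
        simp only [hxdef]
        rw [if_neg (by omega)]
    refine ⟨S, N, ?_⟩
    refine (Set.union_eq_left.mpr ?_).symm
    rintro n ⟨k, rfl⟩
    exact hcof _ (Nat.le_add_right N k)
  · intro h
    have hfin : (sGapForbidden S).Finite := by
      rcases h with hfin | ⟨R, t, hRt⟩
      · rw [sGapForbidden, if_pos hfin]
        apply Set.Finite.union _ (Set.finite_singleton _)
        apply Set.Finite.subset ((Set.finite_Iio (sSup S)).image gapWord)
        rintro w ⟨k, _, hk2, rfl⟩
        exact ⟨k, hk2, rfl⟩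
      · have hsub : {n : ℕ | ∃ k, n = t + k} ⊆ S := hRt ▸ Set.subset_union_right
        have hSinf : ¬ S.Finite := by
          intro hfin
          have hinf : Set.Infinite {n : ℕ | ∃ k, n = t + k} :=
            Set.infinite_of_injective_forall_mem (f := fun k => t + k)
              (add_right_injective t) (fun a => ⟨a, rfl⟩)
          exact hinf (hfin.subset hsub)
        rw [sGapForbidden, if_neg hSinf]
        apply Set.Finite.subset ((Set.finite_Iio t).image gapWord)
        rintro w ⟨k, hk, rfl⟩
        refine ⟨k, ?_, rfl⟩
        simp only [Set.mem_Iio]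
        by_contra h'
        exact hk (hsub ⟨k - t, by omega⟩)
    exact ⟨{0, 1}, Set.toFinite _, sGapForbidden S, hfin, rfl⟩

end SymbDyn
end
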